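/- Let q : ℰ → T be a ℬ–𝒞 equivalence between Fell bundles p_ℬ : ℬ → H and p_𝒞 : 𝒞 → K over an (H,K)-equivalence T, and let 𝒥 be an ideal of 𝒞 with fibres J_k = 𝒥 ∩ C_k. For t ∈ T and k ∈ K with σ(t) = r(k), the closure in E_{t·k} of the span of E_t·J_k equals E_{t·k}·J_{s(k)}, and the latter set (consisting of actual products e·c with e ∈ E_{t·k}, c ∈ J_{s(k)}) is already closed. -/

import Mathlib

noncomputable section

open Filter Topology

namespace FellRieffel

/-! ### Banach bundles (upper-semicontinuous Banach bundles), total-space picture.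

A Banach bundle over `X` is given by a total space `B`, a projection, a fibrewise
addition and scalar multiplication, a norm, and a zero section.  The fibrewise
operations are recorded as total functions on the total space; all axioms are imposed
only on members of a common fibre, so the values elsewhere are irrelevant junk. -/

/-- The data of a Banach bundle: projection, fibrewise addition, fibrewise scalar
multiplication, norm, and zero section. -/
structure BanachBundleData (X B : Type*) where
  proj : B → X
  add : B → B → B
  smul : ℂ → B → B
  norm : B → ℝ
  zero : X → B

namespace BanachBundleData

variable {X B : Type*} (D : BanachBundleData X B)

/-- `b - b'` computed fibrewise. -/
def sub (a b : B) : B := D.add a (D.smul (-1) b)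

/-- The sum of a list of elements of the fibre over `x`. -/
def fibSum (x : X) : List B → B
  | [] => D.zero x
  | b :: l => D.add b (fibSum x l)

/-- The fibre of the bundle over `x`. -/
def Fib (x : X) : Type _ := {b : B // D.proj b = x}

/-- A subset `S` of the fibre over `x` is (sequentially) closed in the fibre norm. -/
def FibClosed (x : X) (S : Set B) : Prop :=
  ∀ (u : ℕ → B) (b : B), (∀ n, u n ∈ S) → D.proj b = x →
    Tendsto (fun n => D.norm (D.sub (u n) b)) atTop (𝓝 0) → b ∈ S

end BanachBundleData

/-- A subset `S` of the total space is a closed linear subspace of the fibre over `x`. -/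
structure FibClosedSubspace {X B : Type*} (D : BanachBundleData X B) (x : X) (S : Set B) :
    Prop where
  proj_mem : ∀ b ∈ S, D.proj b = x
  zero_mem : D.zero x ∈ S
  add_mem : ∀ a ∈ S, ∀ b ∈ S, D.add a b ∈ S
  smul_mem : ∀ (c : ℂ), ∀ b ∈ S, D.smul c b ∈ S
  closed : D.FibClosed x S

/-- The axioms making `D : BanachBundleData X B` an (upper-semicontinuous) Banach
bundle over `X`. -/
structure IsBanachBundle {X B : Type*} [TopologicalSpace X] [TopologicalSpace B]
    (D : BanachBundleData X B) : Prop where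
  continuous_proj : Continuous D.proj
  isOpenMap_proj : IsOpenMap D.proj
  surjective_proj : Function.Surjective D.proj
  proj_zero : ∀ x, D.proj (D.zero x) = x
  proj_add : ∀ a b, D.proj a = D.proj b → D.proj (D.add a b) = D.proj a
  proj_smul : ∀ c b, D.proj (D.smul c b) = D.proj b
  -- each fibre is a complex vector space
  add_comm : ∀ a b, D.proj a = D.proj b → D.add a b = D.add b a
  add_assoc : ∀ a b c, D.proj a = D.proj b → D.proj b = D.proj c →
    D.add (D.add a b) c = D.add a (D.add b c)
  zero_add : ∀ b, D.add (D.zero (D.proj b)) b = b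
  neg_add_cancel : ∀ b, D.add (D.smul (-1) b) b = D.zero (D.proj b)
  one_smul : ∀ b, D.smul 1 b = b
  mul_smul : ∀ (c d : ℂ) b, D.smul (c * d) b = D.smul c (D.smul d b)
  smul_add : ∀ (c : ℂ) a b, D.proj a = D.proj b →
    D.smul c (D.add a b) = D.add (D.smul c a) (D.smul c b)
  add_smul : ∀ (c d : ℂ) b, D.smul (c + d) b = D.add (D.smul c b) (D.smul d b)
  -- each fibre is normed
  norm_nonneg : ∀ b, 0 ≤ D.norm b
  norm_zero : ∀ x, D.norm (D.zero x) = 0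
  eq_zero_of_norm_eq_zero : ∀ b, D.norm b = 0 → b = D.zero (D.proj b)
  norm_add_le : ∀ a b, D.proj a = D.proj b → D.norm (D.add a b) ≤ D.norm a + D.norm b
  norm_smul : ∀ (c : ℂ) b, D.norm (D.smul c b) = ‖c‖ * D.norm b
  -- each fibre is complete
  complete : ∀ (x : X) (u : ℕ → B), (∀ n, D.proj (u n) = x) →
    (∀ ε > 0, ∃ N, ∀ m ≥ N, ∀ n ≥ N, D.norm (D.sub (u m) (u n)) < ε) →
    ∃ b, D.proj b = x ∧ Tendsto (fun n => D.norm (D.sub (u n) b)) atTop (𝓝 0)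
  -- (B1): upper semicontinuity of the norm
  usc_norm : ∀ r : ℝ, IsOpen {b : B | D.norm b < r}
  -- (B2): continuity of fibrewise addition
  continuous_add :
    Continuous (fun p : {p : B × B // D.proj p.1 = D.proj p.2} => D.add p.1.1 p.1.2)
  -- (B3): continuity of scalar multiplication
  continuous_smul : Continuous (fun p : ℂ × B => D.smul p.1 p.2)
  -- (B4): if `p (bᵢ) → x` and `‖bᵢ‖ → 0` then `bᵢ → 0ₓ`
  tendsto_zero : ∀ {ι : Type*} (l : Filter ι) (b : ι → B) (x : X),
    Tendsto (fun i => D.proj (b i)) l (𝓝 x) →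
    Tendsto (fun i => D.norm (b i)) l (𝓝 (0 : ℝ)) →
    Tendsto b l (𝓝 (D.zero x))

/-- A continuous section of the bundle. -/
def IsSection {X B : Type*} [TopologicalSpace X] [TopologicalSpace B]
    (D : BanachBundleData X B) (f : X → B) : Prop :=
  Continuous f ∧ ∀ x, D.proj (f x) = x

/-- The section `f` is compactly supported. -/
def HasCompactSupportSection {X B : Type*} [TopologicalSpace X]
    (D : BanachBundleData X B) (f : X → B) : Prop :=
  ∃ K : Set X, IsCompact K ∧ ∀ x ∉ K, f x = D.zero x

/-- `C` is a Banach subbundle of the bundle `D`: its fibres are closed linear subspaces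
of the fibres of `D`, and the restriction of the projection to `C` (with the relative
topology) is an open map; by Remark 2.8 of the paper this makes `C`, with the relative
topology and the inherited structure, a Banach bundle. -/
structure IsSubbundle {X B : Type*} [TopologicalSpace X] [TopologicalSpace B]
    (D : BanachBundleData X B) (C : Set B) : Prop where
  fib_closedSubspace : ∀ x : X, FibClosedSubspace D x (C ∩ {b | D.proj b = x})
  isOpenMap_restrict : IsOpenMap (fun c : C => D.proj c.1)

/-- The norm-closure of the (ℂ-linear span of the) set `{b ∈ fibre x | P b}` inside the
fibre over `x`, described concretely: the elements of the fibre over `x` which can be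
approximated in norm by finite sums of elements satisfying `P`.  (This agrees with the
closed linear span whenever the class `P` is stable under scalar multiples, as is the
case for all the classes of products to which we apply it.) -/
def fibSpanApprox {X B : Type*} (D : BanachBundleData X B) (x : X) (P : B → Prop) :
    Set B :=
  {c : B | D.proj c = x ∧ ∀ ε > 0, ∃ l : List B, (∀ b ∈ l, P b) ∧
    D.norm (D.sub c (D.fibSum x l)) < ε}

end FellRieffel

namespace FellRieffel

/-! ### Topological groupoids -/

/-- An (algebraic) groupoid structure on a type `G`, with units identified with elements
of `G`: range and source maps, a partially defined multiplication (recorded as a total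
function; its values on non-composable pairs are irrelevant junk, as all axioms are
conditional on composability), and inversion. -/
structure GroupoidStr (G : Type*) where
  src : G → G
  rng : G → G
  mul : G → G → G
  inv : G → G
  src_src : ∀ g, src (src g) = src g
  rng_src : ∀ g, rng (src g) = src g
  src_rng : ∀ g, src (rng g) = rng g
  rng_rng : ∀ g, rng (rng g) = rng g
  rng_mul : ∀ g h, src g = rng h → rng (mul g h) = rng g
  src_mul : ∀ g h, src g = rng h → src (mul g h) = src h
  mul_assoc : ∀ g h k, src g = rng h → src h = rng k →
    mul (mul g h) k = mul g (mul h k)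
  id_mul : ∀ g, mul (rng g) g = g
  mul_id : ∀ g, mul g (src g) = g
  src_inv : ∀ g, src (inv g) = rng g
  rng_inv : ∀ g, rng (inv g) = src g
  inv_inv : ∀ g, inv (inv g) = g
  inv_mul : ∀ g, mul (inv g) g = src g
  mul_inv : ∀ g, mul g (inv g) = rng g

/-- `u` is a unit of the groupoid. -/
def GroupoidStr.IsUnit {G : Type*} (𝒢 : GroupoidStr G) (u : G) : Prop := 𝒢.src u = u

/-- The groupoid operations are compatible with a topology on `G`. -/
structure IsTopGroupoid {G : Type*} [TopologicalSpace G] (𝒢 : GroupoidStr G) : Prop where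
  continuous_mul :
    Continuous (fun p : {p : G × G // 𝒢.src p.1 = 𝒢.rng p.2} => 𝒢.mul p.1.1 p.1.2)
  continuous_inv : Continuous 𝒢.inv

/-! ### Fell bundles over groupoids -/

/-- The data of a Fell bundle over a groupoid: Banach-bundle data together with a
(partially defined, recorded as total) multiplication and an involution on the total
space. -/
structure FellBundleData (G B : Type*) extends BanachBundleData G B where
  mul : B → B → B
  star : B → B

/-- The axioms making `D : FellBundleData G 𝒢 B` a (saturated) Fell bundle over the
topological groupoid `(G, 𝒢)`. -/
structure IsFellBundle {G B : Type*} [TopologicalSpace G] [TopologicalSpace B]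
    (𝒢 : GroupoidStr G) (D : FellBundleData G B)
    extends IsBanachBundle D.toBanachBundleData : Prop where
  -- (FB1), (FB2)
  proj_mul : ∀ a b, 𝒢.src (D.proj a) = 𝒢.rng (D.proj b) →
    D.proj (D.mul a b) = 𝒢.mul (D.proj a) (D.proj b)
  proj_star : ∀ a, D.proj (D.star a) = 𝒢.inv (D.proj a)
  -- continuity of the operations
  continuous_mul : Continuous
    (fun p : {p : B × B // 𝒢.src (D.proj p.1) = 𝒢.rng (D.proj p.2)} => D.mul p.1.1 p.1.2)
  continuous_star : Continuous D.star
  -- bilinearity and associativity of the multiplication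
  mul_add : ∀ a b c, 𝒢.src (D.proj a) = 𝒢.rng (D.proj b) → D.proj b = D.proj c →
    D.mul a (D.add b c) = D.add (D.mul a b) (D.mul a c)
  add_mul : ∀ a b c, D.proj a = D.proj b → 𝒢.src (D.proj a) = 𝒢.rng (D.proj c) →
    D.mul (D.add a b) c = D.add (D.mul a c) (D.mul b c)
  smul_mul : ∀ (z : ℂ) a b, 𝒢.src (D.proj a) = 𝒢.rng (D.proj b) →
    D.mul (D.smul z a) b = D.smul z (D.mul a b)
  mul_smul' : ∀ (z : ℂ) a b, 𝒢.src (D.proj a) = 𝒢.rng (D.proj b) →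
    D.mul a (D.smul z b) = D.smul z (D.mul a b)
  mul_assoc' : ∀ a b c, 𝒢.src (D.proj a) = 𝒢.rng (D.proj b) →
    𝒢.src (D.proj b) = 𝒢.rng (D.proj c) →
    D.mul (D.mul a b) c = D.mul a (D.mul b c)
  -- (FB3) and the involutive *-structure
  star_star : ∀ a, D.star (D.star a) = a
  star_add : ∀ a b, D.proj a = D.proj b → D.star (D.add a b) = D.add (D.star a) (D.star b)
  star_smul : ∀ (z : ℂ) a, D.star (D.smul z a) = D.smul (starRingEnd ℂ z) (D.star a)
  star_mul' : ∀ a b, 𝒢.src (D.proj a) = 𝒢.rng (D.proj b) →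
    D.star (D.mul a b) = D.mul (D.star b) (D.star a)
  -- norm conditions: submultiplicativity and the C*-identity (FB4)/(FB5)
  norm_mul_le : ∀ a b, 𝒢.src (D.proj a) = 𝒢.rng (D.proj b) →
    D.norm (D.mul a b) ≤ D.norm a * D.norm b
  norm_star_mul_self : ∀ a, D.norm (D.mul (D.star a) a) = D.norm a ^ 2
  -- positivity of `a* a` in the C*-algebra over the unit `s (p a)` (FB5)
  star_mul_self_pos : ∀ a, ∃ c, D.proj c = 𝒢.src (D.proj a) ∧
    D.mul (D.star a) a = D.mul (D.star c) c
  -- saturation/fullness (FB5): `span B_g* B_g` is dense in `B_{s(g)}` and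
  -- `span B_g B_g*` is dense in `B_{r(g)}`
  full_src : ∀ g : G, ∀ c, D.proj c = 𝒢.src g →
    c ∈ fibSpanApprox D.toBanachBundleData (𝒢.src g)
      (fun z => ∃ a b, D.proj a = g ∧ D.proj b = g ∧ z = D.mul (D.star a) b)
  full_rng : ∀ g : G, ∀ c, D.proj c = 𝒢.rng g →
    c ∈ fibSpanApprox D.toBanachBundleData (𝒢.rng g)
      (fun z => ∃ a b, D.proj a = g ∧ D.proj b = g ∧ z = D.mul a (D.star b))

variable {G B : Type*}

/-- A Fell subbundle: a Banach subbundle closed under multiplication and involution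
which is a Fell bundle under the inherited operations (the only non-automatic part of
the latter being the fullness (FB5) of the fibres of the subbundle over its own unit
fibres). -/
structure IsFellSubbundle [TopologicalSpace G] [TopologicalSpace B]
    (𝒢 : GroupoidStr G) (D : FellBundleData G B) (J : Set B) : Prop where
  subbundle : IsSubbundle D.toBanachBundleData J
  mul_mem : ∀ a ∈ J, ∀ b ∈ J, 𝒢.src (D.proj a) = 𝒢.rng (D.proj b) → D.mul a b ∈ J
  star_mem : ∀ a ∈ J, D.star a ∈ J
  full_src : ∀ g : G, ∀ c ∈ J, D.proj c = 𝒢.src g →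
    c ∈ fibSpanApprox D.toBanachBundleData (𝒢.src g)
      (fun z => ∃ a ∈ J, ∃ b ∈ J, D.proj a = g ∧ D.proj b = g ∧ z = D.mul (D.star a) b)
  full_rng : ∀ g : G, ∀ c ∈ J, D.proj c = 𝒢.rng g →
    c ∈ fibSpanApprox D.toBanachBundleData (𝒢.rng g)
      (fun z => ∃ a ∈ J, ∃ b ∈ J, D.proj a = g ∧ D.proj b = g ∧ z = D.mul a (D.star b))

/-- An ideal of a Fell bundle: a Fell subbundle absorbing under multiplication. -/
structure IsFellIdeal [TopologicalSpace G] [TopologicalSpace B]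
    (𝒢 : GroupoidStr G) (D : FellBundleData G B) (J : Set B) : Prop where
  fellSubbundle : IsFellSubbundle 𝒢 D J
  mul_mem_left : ∀ a b, 𝒢.src (D.proj a) = 𝒢.rng (D.proj b) → a ∈ J → D.mul a b ∈ J
  mul_mem_right : ∀ a b, 𝒢.src (D.proj a) = 𝒢.rng (D.proj b) → b ∈ J → D.mul a b ∈ J

/-- A weak ideal of a Fell bundle: a Banach subbundle absorbing under multiplication. -/
structure IsWeakFellIdeal [TopologicalSpace G] [TopologicalSpace B]
    (𝒢 : GroupoidStr G) (D : FellBundleData G B) (J : Set B) : Prop where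
  subbundle : IsSubbundle D.toBanachBundleData J
  mul_mem_left : ∀ a b, 𝒢.src (D.proj a) = 𝒢.rng (D.proj b) → a ∈ J → D.mul a b ∈ J
  mul_mem_right : ∀ a b, 𝒢.src (D.proj a) = 𝒢.rng (D.proj b) → b ∈ J → D.mul a b ∈ J

end FellRieffel

namespace FellRieffel

/-! ### Equivalences of groupoids -/

/-- The data of an `(H,K)`-equivalence `T`: moment maps `ρ : T → H⁰ ⊆ H` and
`σ : T → K⁰ ⊆ K`, a left `H`-action and a right `K`-action (recorded as total
functions, junk off the composable sets), and the translation maps `τH`, `τK`. -/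
structure GroupoidEquivData (H K T : Type*) where
  ρ : T → H
  σ : T → K
  lact : H → T → T
  ract : T → K → T
  τH : T → T → H
  τK : T → T → K

/-- The axioms of an `(H,K)`-equivalence of topological groupoids: `T` is a free left
`H`-space and a free right `K`-space with commuting actions and open continuous moment
maps `ρ`, `σ` (onto the unit spaces) which induce bijections `T/K ≅ H⁰` and `H\T ≅ K⁰`;
the latter is encoded by the continuous open translation maps `τH` (defined for pairs
with `σ t = σ t'`, with `τH t t' · t' = t`) and `τK` (defined for pairs with
`ρ t = ρ t'`, with `t · τK t t' = t'`). -/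
structure IsGroupoidEquiv {H K T : Type*} [TopologicalSpace H] [TopologicalSpace K]
    [TopologicalSpace T] (𝒢H : GroupoidStr H) (𝒢K : GroupoidStr K)
    (E : GroupoidEquivData H K T) : Prop where
  ρ_unit : ∀ t, 𝒢H.IsUnit (E.ρ t)
  σ_unit : ∀ t, 𝒢K.IsUnit (E.σ t)
  continuous_ρ : Continuous E.ρ
  continuous_σ : Continuous E.σ
  isOpenMap_ρ : IsOpenMap E.ρ
  isOpenMap_σ : IsOpenMap E.σ
  surj_ρ : ∀ u : H, 𝒢H.IsUnit u → ∃ t, E.ρ t = u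
  surj_σ : ∀ u : K, 𝒢K.IsUnit u → ∃ t, E.σ t = u
  continuous_lact :
    Continuous (fun p : {p : H × T // 𝒢H.src p.1 = E.ρ p.2} => E.lact p.1.1 p.1.2)
  continuous_ract :
    Continuous (fun p : {p : T × K // E.σ p.1 = 𝒢K.rng p.2} => E.ract p.1.1 p.1.2)
  ρ_lact : ∀ h t, 𝒢H.src h = E.ρ t → E.ρ (E.lact h t) = 𝒢H.rng h
  σ_lact : ∀ h t, 𝒢H.src h = E.ρ t → E.σ (E.lact h t) = E.σ t
  ρ_ract : ∀ t k, E.σ t = 𝒢K.rng k → E.ρ (E.ract t k) = E.ρ t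
  σ_ract : ∀ t k, E.σ t = 𝒢K.rng k → E.σ (E.ract t k) = 𝒢K.src k
  lact_id : ∀ t, E.lact (E.ρ t) t = t
  lact_mul : ∀ h h' t, 𝒢H.src h = 𝒢H.rng h' → 𝒢H.src h' = E.ρ t →
    E.lact (𝒢H.mul h h') t = E.lact h (E.lact h' t)
  ract_id : ∀ t, E.ract t (E.σ t) = t
  ract_mul : ∀ t k k', E.σ t = 𝒢K.rng k → 𝒢K.src k = 𝒢K.rng k' →
    E.ract t (𝒢K.mul k k') = E.ract (E.ract t k) k'
  lact_ract : ∀ h t k, 𝒢H.src h = E.ρ t → E.σ t = 𝒢K.rng k →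
    E.lact h (E.ract t k) = E.ract (E.lact h t) k
  free_l : ∀ h t, 𝒢H.src h = E.ρ t → E.lact h t = t → h = E.ρ t
  free_r : ∀ t k, E.σ t = 𝒢K.rng k → E.ract t k = t → k = E.σ t
  τH_src : ∀ t t', E.σ t = E.σ t' → 𝒢H.src (E.τH t t') = E.ρ t'
  τH_spec : ∀ t t', E.σ t = E.σ t' → E.lact (E.τH t t') t' = t
  τK_rng : ∀ t t', E.ρ t = E.ρ t' → 𝒢K.rng (E.τK t t') = E.σ t
  τK_spec : ∀ t t', E.ρ t = E.ρ t' → E.ract t (E.τK t t') = t'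
  continuous_τH :
    Continuous (fun p : {p : T × T // E.σ p.1 = E.σ p.2} => E.τH p.1.1 p.1.2)
  continuous_τK :
    Continuous (fun p : {p : T × T // E.ρ p.1 = E.ρ p.2} => E.τK p.1.1 p.1.2)
  isOpenMap_τH : IsOpenMap (fun p : {p : T × T // E.σ p.1 = E.σ p.2} => E.τH p.1.1 p.1.2)
  isOpenMap_τK : IsOpenMap (fun p : {p : T × T // E.ρ p.1 = E.ρ p.2} => E.τK p.1.1 p.1.2)

/-! ### Equivalences of Fell bundles -/

/-- The data of a `ℬ`–`𝒞` equivalence: a Banach bundle `q : ℰ → T` together with a left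
`ℬ`-action, a right `𝒞`-action, and `ℬ`- and `𝒞`-valued inner products (all recorded as
total functions; values off the composable sets are irrelevant junk). -/
structure FellEquivData (T BB CC EE : Type*) where
  bund : BanachBundleData T EE
  lact : BB → EE → EE
  ract : EE → CC → EE
  linner : EE → EE → BB
  rinner : EE → EE → CC

/-- The complete setting of Section 3 of the paper: Fell bundles `p_ℬ : ℬ → H` and
`p_𝒞 : 𝒞 → K` over an `(H,K)`-equivalence `T`, and equivalence data `q : ℰ → T`. -/
structure EquivSetup (H K T BB CC EE : Type*) where
  𝒢H : GroupoidStr H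
  𝒢K : GroupoidStr K
  DB : FellBundleData H BB
  DC : FellBundleData K CC
  Teq : GroupoidEquivData H K T
  FE : FellEquivData T BB CC EE

variable {H K T BB CC EE : Type*}

namespace EquivSetup

variable (S : EquivSetup H K T BB CC EE)

/-- Projection of the bundle `ℰ`. -/
def q : EE → T := S.FE.bund.proj

universe v₁ v₂ v₃

/-- The axioms making `S.FE` a `ℬ`–`𝒞` equivalence of Fell bundles
(Definition 2.14 of the paper). -/
structure IsFellEquiv [TopologicalSpace H] [TopologicalSpace K] [TopologicalSpace T]
    [TopologicalSpace BB] [TopologicalSpace CC] [TopologicalSpace EE] : Prop where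
  groupoidH : IsTopGroupoid S.𝒢H
  groupoidK : IsTopGroupoid S.𝒢K
  fellB : IsFellBundle.{_, _, v₁} S.𝒢H S.DB
  fellC : IsFellBundle.{_, _, v₂} S.𝒢K S.DC
  equivT : IsGroupoidEquiv S.𝒢H S.𝒢K S.Teq
  bund : IsBanachBundle.{_, _, v₃} S.FE.bund
  -- the left ℬ-action
  proj_lact : ∀ b e, S.𝒢H.src (S.DB.proj b) = S.Teq.ρ (S.q e) →
    S.q (S.FE.lact b e) = S.Teq.lact (S.DB.proj b) (S.q e)
  continuous_lact : Continuous
    (fun p : {p : BB × EE // S.𝒢H.src (S.DB.proj p.1) = S.Teq.ρ (S.q p.2)} =>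
      S.FE.lact p.1.1 p.1.2)
  lact_add : ∀ b e f, S.𝒢H.src (S.DB.proj b) = S.Teq.ρ (S.q e) → S.q e = S.q f →
    S.FE.lact b (S.FE.bund.add e f) = S.FE.bund.add (S.FE.lact b e) (S.FE.lact b f)
  add_lact : ∀ b b' e, S.DB.proj b = S.DB.proj b' →
    S.𝒢H.src (S.DB.proj b) = S.Teq.ρ (S.q e) →
    S.FE.lact (S.DB.add b b') e = S.FE.bund.add (S.FE.lact b e) (S.FE.lact b' e)
  smul_lact : ∀ (z : ℂ) b e, S.𝒢H.src (S.DB.proj b) = S.Teq.ρ (S.q e) →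
    S.FE.lact (S.DB.smul z b) e = S.FE.bund.smul z (S.FE.lact b e)
  lact_smul : ∀ (z : ℂ) b e, S.𝒢H.src (S.DB.proj b) = S.Teq.ρ (S.q e) →
    S.FE.lact b (S.FE.bund.smul z e) = S.FE.bund.smul z (S.FE.lact b e)
  lact_lact : ∀ b b' e, S.𝒢H.src (S.DB.proj b) = S.𝒢H.rng (S.DB.proj b') →
    S.𝒢H.src (S.DB.proj b') = S.Teq.ρ (S.q e) →
    S.FE.lact (S.DB.mul b b') e = S.FE.lact b (S.FE.lact b' e)
  norm_lact_le : ∀ b e, S.𝒢H.src (S.DB.proj b) = S.Teq.ρ (S.q e) →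
    S.FE.bund.norm (S.FE.lact b e) ≤ S.DB.norm b * S.FE.bund.norm e
  -- the right 𝒞-action
  proj_ract : ∀ e c, S.Teq.σ (S.q e) = S.𝒢K.rng (S.DC.proj c) →
    S.q (S.FE.ract e c) = S.Teq.ract (S.q e) (S.DC.proj c)
  continuous_ract : Continuous
    (fun p : {p : EE × CC // S.Teq.σ (S.q p.1) = S.𝒢K.rng (S.DC.proj p.2)} =>
      S.FE.ract p.1.1 p.1.2)
  ract_add : ∀ e f c, S.q e = S.q f → S.Teq.σ (S.q e) = S.𝒢K.rng (S.DC.proj c) →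
    S.FE.ract (S.FE.bund.add e f) c = S.FE.bund.add (S.FE.ract e c) (S.FE.ract f c)
  add_ract : ∀ e c c', S.DC.proj c = S.DC.proj c' →
    S.Teq.σ (S.q e) = S.𝒢K.rng (S.DC.proj c) →
    S.FE.ract e (S.DC.add c c') = S.FE.bund.add (S.FE.ract e c) (S.FE.ract e c')
  smul_ract : ∀ (z : ℂ) e c, S.Teq.σ (S.q e) = S.𝒢K.rng (S.DC.proj c) →
    S.FE.ract (S.FE.bund.smul z e) c = S.FE.bund.smul z (S.FE.ract e c)
  ract_smul : ∀ (z : ℂ) e c, S.Teq.σ (S.q e) = S.𝒢K.rng (S.DC.proj c) →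
    S.FE.ract e (S.DC.smul z c) = S.FE.bund.smul z (S.FE.ract e c)
  ract_ract : ∀ e c c', S.Teq.σ (S.q e) = S.𝒢K.rng (S.DC.proj c) →
    S.𝒢K.src (S.DC.proj c) = S.𝒢K.rng (S.DC.proj c') →
    S.FE.ract e (S.DC.mul c c') = S.FE.ract (S.FE.ract e c) c'
  norm_ract_le : ∀ e c, S.Teq.σ (S.q e) = S.𝒢K.rng (S.DC.proj c) →
    S.FE.bund.norm (S.FE.ract e c) ≤ S.FE.bund.norm e * S.DC.norm c
  -- (E1)
  lact_ract : ∀ b e c, S.𝒢H.src (S.DB.proj b) = S.Teq.ρ (S.q e) →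
    S.Teq.σ (S.q e) = S.𝒢K.rng (S.DC.proj c) →
    S.FE.lact b (S.FE.ract e c) = S.FE.ract (S.FE.lact b e) c
  -- (E2)(a)
  proj_linner : ∀ e f, S.Teq.σ (S.q e) = S.Teq.σ (S.q f) →
    S.DB.proj (S.FE.linner e f) = S.Teq.τH (S.q e) (S.q f)
  proj_rinner : ∀ e f, S.Teq.ρ (S.q e) = S.Teq.ρ (S.q f) →
    S.DC.proj (S.FE.rinner e f) = S.Teq.τK (S.q e) (S.q f)
  continuous_linner : Continuous
    (fun p : {p : EE × EE // S.Teq.σ (S.q p.1) = S.Teq.σ (S.q p.2)} =>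
      S.FE.linner p.1.1 p.1.2)
  continuous_rinner : Continuous
    (fun p : {p : EE × EE // S.Teq.ρ (S.q p.1) = S.Teq.ρ (S.q p.2)} =>
      S.FE.rinner p.1.1 p.1.2)
  -- sesquilinearity
  linner_add_left : ∀ e e' f, S.q e = S.q e' → S.Teq.σ (S.q e) = S.Teq.σ (S.q f) →
    S.FE.linner (S.FE.bund.add e e') f = S.DB.add (S.FE.linner e f) (S.FE.linner e' f)
  linner_add_right : ∀ e f f', S.q f = S.q f' → S.Teq.σ (S.q e) = S.Teq.σ (S.q f) →
    S.FE.linner e (S.FE.bund.add f f') = S.DB.add (S.FE.linner e f) (S.FE.linner e f')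
  linner_smul_left : ∀ (z : ℂ) e f, S.Teq.σ (S.q e) = S.Teq.σ (S.q f) →
    S.FE.linner (S.FE.bund.smul z e) f = S.DB.smul z (S.FE.linner e f)
  linner_smul_right : ∀ (z : ℂ) e f, S.Teq.σ (S.q e) = S.Teq.σ (S.q f) →
    S.FE.linner e (S.FE.bund.smul z f) = S.DB.smul (starRingEnd ℂ z) (S.FE.linner e f)
  rinner_add_left : ∀ e e' f, S.q e = S.q e' → S.Teq.ρ (S.q e) = S.Teq.ρ (S.q f) →
    S.FE.rinner (S.FE.bund.add e e') f = S.DC.add (S.FE.rinner e f) (S.FE.rinner e' f)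
  rinner_add_right : ∀ e f f', S.q f = S.q f' → S.Teq.ρ (S.q e) = S.Teq.ρ (S.q f) →
    S.FE.rinner e (S.FE.bund.add f f') = S.DC.add (S.FE.rinner e f) (S.FE.rinner e f')
  rinner_smul_left : ∀ (z : ℂ) e f, S.Teq.ρ (S.q e) = S.Teq.ρ (S.q f) →
    S.FE.rinner (S.FE.bund.smul z e) f = S.DC.smul (starRingEnd ℂ z) (S.FE.rinner e f)
  rinner_smul_right : ∀ (z : ℂ) e f, S.Teq.ρ (S.q e) = S.Teq.ρ (S.q f) →
    S.FE.rinner e (S.FE.bund.smul z f) = S.DC.smul z (S.FE.rinner e f)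
  -- (E2)(b)
  linner_star : ∀ e f, S.Teq.σ (S.q e) = S.Teq.σ (S.q f) →
    S.DB.star (S.FE.linner e f) = S.FE.linner f e
  rinner_star : ∀ e f, S.Teq.ρ (S.q e) = S.Teq.ρ (S.q f) →
    S.DC.star (S.FE.rinner e f) = S.FE.rinner f e
  -- (E2)(c)
  linner_lact : ∀ b e f, S.𝒢H.src (S.DB.proj b) = S.Teq.ρ (S.q e) →
    S.Teq.σ (S.q e) = S.Teq.σ (S.q f) →
    S.FE.linner (S.FE.lact b e) f = S.DB.mul b (S.FE.linner e f)
  rinner_ract : ∀ e f c, S.Teq.ρ (S.q e) = S.Teq.ρ (S.q f) →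
    S.Teq.σ (S.q f) = S.𝒢K.rng (S.DC.proj c) →
    S.FE.rinner e (S.FE.ract f c) = S.DC.mul (S.FE.rinner e f) c
  -- (E2)(d)
  imprim : ∀ e f g, S.Teq.σ (S.q e) = S.Teq.σ (S.q f) →
    S.Teq.ρ (S.q f) = S.Teq.ρ (S.q g) →
    S.FE.lact (S.FE.linner e f) g = S.FE.ract e (S.FE.rinner f g)
  -- (E3): each fibre `E_t` is a `B_{ρ(t)}`–`C_{σ(t)}` imprimitivity bimodule
  linner_self_pos : ∀ e, ∃ b, S.DB.proj b = S.Teq.ρ (S.q e) ∧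
    S.FE.linner e e = S.DB.mul (S.DB.star b) b
  rinner_self_pos : ∀ e, ∃ c, S.DC.proj c = S.Teq.σ (S.q e) ∧
    S.FE.rinner e e = S.DC.mul (S.DC.star c) c
  norm_linner_self : ∀ e, S.DB.norm (S.FE.linner e e) = S.FE.bund.norm e ^ 2
  norm_rinner_self : ∀ e, S.DC.norm (S.FE.rinner e e) = S.FE.bund.norm e ^ 2
  linner_full : ∀ t : T, ∀ b, S.DB.proj b = S.Teq.ρ t →
    b ∈ fibSpanApprox S.DB.toBanachBundleData (S.Teq.ρ t)
      (fun w => ∃ e f, S.q e = t ∧ S.q f = t ∧ w = S.FE.linner e f)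
  rinner_full : ∀ t : T, ∀ c, S.DC.proj c = S.Teq.σ t →
    c ∈ fibSpanApprox S.DC.toBanachBundleData (S.Teq.σ t)
      (fun w => ∃ e f, S.q e = t ∧ S.q f = t ∧ w = S.FE.rinner e f)

/-! #### Submodules, products and the associated ideals -/

/-- `ℰ·𝒥`: the set of actual products `e·c` with `c ∈ 𝒥` (over all composable pairs). -/
def eDotJ (J : Set CC) : Set EE :=
  {z : EE | ∃ e c, c ∈ J ∧ S.Teq.σ (S.q e) = S.𝒢K.rng (S.DC.proj c) ∧ z = S.FE.ract e c}

/-- `𝒦·ℰ`: the set of actual products `b·e` with `b ∈ 𝒦`. -/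
def kDotE (Kk : Set BB) : Set EE :=
  {z : EE | ∃ b e, b ∈ Kk ∧ S.𝒢H.src (S.DB.proj b) = S.Teq.ρ (S.q e) ∧ z = S.FE.lact b e}

/-- A Banach `ℬ`–`𝒞` submodule of `ℰ`: a Banach subbundle stable under the two
actions. -/
structure IsBCSubmodule [TopologicalSpace T] [TopologicalSpace EE] (M : Set EE) :
    Prop where
  subbundle : IsSubbundle S.FE.bund M
  lact_mem : ∀ b e, S.𝒢H.src (S.DB.proj b) = S.Teq.ρ (S.q e) → e ∈ M → S.FE.lact b e ∈ M
  ract_mem : ∀ e c, S.Teq.σ (S.q e) = S.𝒢K.rng (S.DC.proj c) → e ∈ M →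
    S.FE.ract e c ∈ M

/-- A full Banach `ℬ`–`𝒞` submodule of `ℰ`: moreover `closure span B_h·M_t = M_{h·t}`
and `closure span M_t·C_k = M_{t·k}`. -/
structure IsFullBCSubmodule [TopologicalSpace T] [TopologicalSpace EE] (M : Set EE) :
    Prop where
  bcSubmodule : IsBCSubmodule S M
  lfull : ∀ (h : H) (t : T), S.𝒢H.src h = S.Teq.ρ t →
    M ∩ {e | S.q e = S.Teq.lact h t}
      = fibSpanApprox S.FE.bund (S.Teq.lact h t)
          (fun w => ∃ b m, S.DB.proj b = h ∧ m ∈ M ∧ S.q m = t ∧ w = S.FE.lact b m)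
  rfull : ∀ (t : T) (k : K), S.Teq.σ t = S.𝒢K.rng k →
    M ∩ {e | S.q e = S.Teq.ract t k}
      = fibSpanApprox S.FE.bund (S.Teq.ract t k)
          (fun w => ∃ m c, m ∈ M ∧ S.q m = t ∧ S.DC.proj c = k ∧ w = S.FE.ract m c)

/-- The ideal `R_t = closure span ⟨E_t, M_t⟩_𝒞` of `C_{σ(t)}` attached to a submodule
`ℳ` and `t ∈ T`. -/
def rIdeal (M : Set EE) (t : T) : Set CC :=
  fibSpanApprox S.DC.toBanachBundleData (S.Teq.σ t)
    (fun w => ∃ e m, S.q e = t ∧ m ∈ M ∧ S.q m = t ∧ w = S.FE.rinner e m)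

/-- The ideal `L_t = closure span ⟨M_t, E_t⟩_ℬ` of `B_{ρ(t)}` attached to a submodule
`ℳ` and `t ∈ T`. -/
def lIdeal (M : Set EE) (t : T) : Set BB :=
  fibSpanApprox S.DB.toBanachBundleData (S.Teq.ρ t)
    (fun w => ∃ m e, m ∈ M ∧ S.q m = t ∧ S.q e = t ∧ w = S.FE.linner m e)

/-- `𝒥_ℳ = ∐_{k ∈ K} R_{r(k)}·C_k`, the subset of `𝒞` attached to a submodule `ℳ`
(the fibre over `k` consisting of actual products `a·c`, `a ∈ R_{r(k)}`, `c ∈ C_k`). -/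
def jOfM (M : Set EE) : Set CC :=
  {z : CC | ∃ (t : T) (a c : CC), S.Teq.σ t = S.𝒢K.rng (S.DC.proj c) ∧
    a ∈ S.rIdeal M t ∧ z = S.DC.mul a c}

/-- `𝒦_ℳ = ∐_{h ∈ H} L_{r(h)}·B_h`, the subset of `ℬ` attached to a submodule `ℳ`. -/
def kOfM (M : Set EE) : Set BB :=
  {z : BB | ∃ (t : T) (a b : BB), S.Teq.ρ t = S.𝒢H.rng (S.DB.proj b) ∧
    a ∈ S.lIdeal M t ∧ z = S.DB.mul a b}

end EquivSetup

end FellRieffel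

namespace FellRieffel

open EquivSetup

/-! ### Auxiliary development: fibres as normed spaces and C*-algebras -/

section FibreConstruction

variable {X B : Type*} [TopologicalSpace X] [TopologicalSpace B]

namespace IsBanachBundle

variable {D : BanachBundleData X B} (hD : IsBanachBundle D)

include hD in
lemma smul_zero' (z : ℂ) (x : X) : D.smul z (D.zero x) = D.zero x := by
  have h1 : D.norm (D.smul z (D.zero x)) = 0 := by
    rw [hD.norm_smul, hD.norm_zero, mul_zero]
  have h2 := hD.eq_zero_of_norm_eq_zero _ h1
  rwa [hD.proj_smul, hD.proj_zero] at h2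

include hD in
lemma zero_smul' (b : B) : D.smul 0 b = D.zero (D.proj b) := by
  have h1 : D.norm (D.smul 0 b) = 0 := by
    rw [hD.norm_smul]; simp
  have h2 := hD.eq_zero_of_norm_eq_zero _ h1
  rwa [hD.proj_smul] at h2

end IsBanachBundle

/-- The fibre of a Banach bundle over a point, as a type. -/
def Fibre (D : BanachBundleData X B) (_hD : IsBanachBundle D) (x : X) : Type _ :=
  {b : B // D.proj b = x}

namespace Fibre

variable {D : BanachBundleData X B} {hD : IsBanachBundle D} {x : X}

instance : Zero (Fibre D hD x) := ⟨⟨D.zero x, hD.proj_zero x⟩⟩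
instance : Add (Fibre D hD x) :=
  ⟨fun a b => ⟨D.add a.1 b.1, by rw [hD.proj_add _ _ (a.2.trans b.2.symm)]; exact a.2⟩⟩
instance : Neg (Fibre D hD x) :=
  ⟨fun b => ⟨D.smul (-1) b.1, (hD.proj_smul _ _).trans b.2⟩⟩
instance : SMul ℂ (Fibre D hD x) :=
  ⟨fun z b => ⟨D.smul z b.1, (hD.proj_smul _ _).trans b.2⟩⟩

lemma add_def (a b : Fibre D hD x) : (a + b).1 = D.add a.1 b.1 := rfl
lemma zero_def : (0 : Fibre D hD x).1 = D.zero x := rfl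
lemma neg_def (a : Fibre D hD x) : (-a).1 = D.smul (-1) a.1 := rfl
lemma smul_def (z : ℂ) (a : Fibre D hD x) : (z • a).1 = D.smul z a.1 := rfl
lemma val_mem (a : Fibre D hD x) : D.proj a.1 = x := a.2

instance : AddCommGroup (Fibre D hD x) where
  add_assoc a b c := Subtype.ext <|
    hD.add_assoc a.1 b.1 c.1 (a.2.trans b.2.symm) (b.2.trans c.2.symm)
  zero_add b := Subtype.ext <| by
    have := hD.zero_add b.1; rw [b.2] at this; exact this
  add_zero b := Subtype.ext <| by
    have h := hD.add_comm b.1 (D.zero x) (b.2.trans (hD.proj_zero x).symm)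
    have := hD.zero_add b.1; rw [b.2] at this
    exact h.trans this
  add_comm a b := Subtype.ext <| hD.add_comm a.1 b.1 (a.2.trans b.2.symm)
  neg_add_cancel a := Subtype.ext <| by
    have := hD.neg_add_cancel a.1; rw [a.2] at this; exact this
  nsmul := nsmulRec
  zsmul := zsmulRec

lemma sub_def (a b : Fibre D hD x) : (a - b).1 = D.sub a.1 b.1 := rfl

instance : Module ℂ (Fibre D hD x) where
  one_smul b := Subtype.ext <| hD.one_smul b.1
  mul_smul z w b := Subtype.ext <| hD.mul_smul z w b.1
  smul_zero z := Subtype.ext <| hD.smul_zero' z x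
  smul_add z a b := Subtype.ext <| hD.smul_add z a.1 b.1 (a.2.trans b.2.symm)
  add_smul z w b := Subtype.ext <| hD.add_smul z w b.1
  zero_smul b := Subtype.ext <| by
    have := hD.zero_smul' b.1; rw [b.2] at this; exact this

noncomputable instance : NormedAddCommGroup (Fibre D hD x) :=
  AddGroupNorm.toNormedAddCommGroup
    { toFun := fun b => D.norm b.1
      map_zero' := hD.norm_zero x
      add_le' := fun a b => hD.norm_add_le a.1 b.1 (a.2.trans b.2.symm)
      neg' := fun b => by
        show D.norm (D.smul (-1) b.1) = D.norm b.1
        rw [hD.norm_smul]; simp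
      eq_zero_of_map_eq_zero' := fun b h => Subtype.ext <| by
        have := hD.eq_zero_of_norm_eq_zero b.1 h; rw [b.2] at this; exact this }

lemma norm_def (a : Fibre D hD x) : ‖a‖ = D.norm a.1 := rfl
lemma dist_def (a b : Fibre D hD x) : dist a b = D.norm (D.sub a.1 b.1) := by
  rw [dist_eq_norm]; rfl

noncomputable instance : NormedSpace ℂ (Fibre D hD x) where
  norm_smul_le z b := le_of_eq (hD.norm_smul z b.1)

instance : CompleteSpace (Fibre D hD x) := by
  refine Metric.complete_of_cauchySeq_tendsto fun u hu => ?_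
  rw [Metric.cauchySeq_iff] at hu
  obtain ⟨b, hb, htends⟩ := hD.complete x (fun n => (u n).1) (fun n => (u n).2)
    (fun ε hε => by
      obtain ⟨N, hN⟩ := hu ε hε
      exact ⟨N, fun m hm n hn => by have := hN m hm n hn; rwa [dist_def] at this⟩)
  refine ⟨(⟨b, hb⟩ : Fibre D hD x), ?_⟩
  exact tendsto_iff_dist_tendsto_zero.mpr (htends.congr fun n => (dist_def _ _).symm)

end Fibre

end FibreConstruction

section UnitFibre

variable {G B : Type*} [TopologicalSpace G] [TopologicalSpace B]

namespace GroupoidStr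

variable {𝒢 : GroupoidStr G} {u : G}

lemma IsUnit.rng_eq (hu : 𝒢.IsUnit u) : 𝒢.rng u = u := by
  conv_lhs => rw [← hu]
  rw [𝒢.rng_src, hu]

lemma IsUnit.inv_eq (hu : 𝒢.IsUnit u) : 𝒢.inv u = u := by
  have h1 : 𝒢.src (𝒢.inv u) = u := by rw [𝒢.src_inv, hu.rng_eq]
  have h2 := 𝒢.mul_id (𝒢.inv u)
  rw [h1] at h2
  have h3 := 𝒢.inv_mul u
  rw [hu] at h3
  rw [← h2]
  have h4 : 𝒢.mul (𝒢.inv u) u = u := h3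
  exact h4

lemma IsUnit.mul_self (hu : 𝒢.IsUnit u) : 𝒢.mul u u = u := by
  have := 𝒢.mul_id u
  rwa [hu] at this

end GroupoidStr

/-- The fibre of a Fell bundle over a unit, as a type; it will be endowed with its
C*-algebra structure. -/
def UnitFibre (𝒢 : GroupoidStr G) (D : FellBundleData G B) (_hD : IsFellBundle 𝒢 D)
    (u : G) (_hu : 𝒢.IsUnit u) : Type _ :=
  {b : B // D.proj b = u}

namespace UnitFibre

variable {𝒢 : GroupoidStr G} {D : FellBundleData G B} {hD : IsFellBundle 𝒢 D}
  {u : G} {hu : 𝒢.IsUnit u}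

/-- The unit fibre is the Banach-bundle fibre. -/
def toFibre (a : UnitFibre 𝒢 D hD u hu) : Fibre D.toBanachBundleData hD.toIsBanachBundle u := a

noncomputable instance : NormedAddCommGroup (UnitFibre 𝒢 D hD u hu) :=
  inferInstanceAs (NormedAddCommGroup (Fibre D.toBanachBundleData hD.toIsBanachBundle u))

noncomputable instance : NormedSpace ℂ (UnitFibre 𝒢 D hD u hu) :=
  inferInstanceAs (NormedSpace ℂ (Fibre D.toBanachBundleData hD.toIsBanachBundle u))

instance : CompleteSpace (UnitFibre 𝒢 D hD u hu) :=
  inferInstanceAs (CompleteSpace (Fibre D.toBanachBundleData hD.toIsBanachBundle u))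

lemma add_def (a b : UnitFibre 𝒢 D hD u hu) : (a + b).1 = D.add a.1 b.1 := rfl
lemma zero_def : (0 : UnitFibre 𝒢 D hD u hu).1 = D.zero u := rfl
lemma smul_def (z : ℂ) (a : UnitFibre 𝒢 D hD u hu) : (z • a).1 = D.smul z a.1 := rfl
lemma sub_def (a b : UnitFibre 𝒢 D hD u hu) : (a - b).1 = D.sub a.1 b.1 := rfl
lemma norm_def (a : UnitFibre 𝒢 D hD u hu) : ‖a‖ = D.norm a.1 := rfl
lemma val_mem (a : UnitFibre 𝒢 D hD u hu) : D.proj a.1 = u := a.2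

lemma comp (a b : UnitFibre 𝒢 D hD u hu) :
    𝒢.src (D.proj a.1) = 𝒢.rng (D.proj b.1) := by
  rw [a.2, b.2, hu, hu.rng_eq]

instance : Mul (UnitFibre 𝒢 D hD u hu) :=
  ⟨fun a b => ⟨D.mul a.1 b.1, by
    rw [hD.proj_mul _ _ (comp a b), a.2, b.2, hu.mul_self]⟩⟩

lemma mul_def (a b : UnitFibre 𝒢 D hD u hu) : (a * b).1 = D.mul a.1 b.1 := rfl

instance : Star (UnitFibre 𝒢 D hD u hu) :=
  ⟨fun a => ⟨D.star a.1, by rw [hD.proj_star, a.2, hu.inv_eq]⟩⟩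

lemma star_def (a : UnitFibre 𝒢 D hD u hu) : (star a).1 = D.star a.1 := rfl

noncomputable instance : NonUnitalNormedRing (UnitFibre 𝒢 D hD u hu) :=
  { (inferInstance : NormedAddCommGroup (UnitFibre 𝒢 D hD u hu)) with
    left_distrib := fun a b c => Subtype.ext <|
      hD.mul_add a.1 b.1 c.1 (comp a b) (b.2.trans c.2.symm)
    right_distrib := fun a b c => Subtype.ext <|
      hD.add_mul a.1 b.1 c.1 (a.2.trans b.2.symm) (comp a c)
    zero_mul := fun a => Subtype.ext <| by
      show D.mul (D.zero u) a.1 = D.zero u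
      have hcomp : 𝒢.src (D.proj (D.zero u)) = 𝒢.rng (D.proj a.1) := by
        rw [hD.proj_zero, a.2, hu, hu.rng_eq]
      have h0 : D.zero u = D.smul 0 (D.zero u) := (hD.smul_zero' 0 u).symm
      rw [h0, hD.smul_mul 0 (D.zero u) a.1 hcomp, hD.zero_smul',
        hD.proj_mul _ _ hcomp, hD.proj_zero, a.2, hu.mul_self, ← h0]
    mul_zero := fun a => Subtype.ext <| by
      show D.mul a.1 (D.zero u) = D.zero u
      have hcomp : 𝒢.src (D.proj a.1) = 𝒢.rng (D.proj (D.zero u)) := by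
        rw [hD.proj_zero, a.2, hu, hu.rng_eq]
      have h0 : D.zero u = D.smul 0 (D.zero u) := (hD.smul_zero' 0 u).symm
      rw [h0, hD.mul_smul' 0 a.1 (D.zero u) hcomp, hD.zero_smul',
        hD.proj_mul _ _ hcomp, hD.proj_zero, a.2, hu.mul_self, ← h0]
    mul_assoc := fun a b c => Subtype.ext <|
      hD.mul_assoc' a.1 b.1 c.1 (comp a b) (comp b c)
    norm_mul_le := fun a b => hD.norm_mul_le a.1 b.1 (comp a b) }

instance : StarRing (UnitFibre 𝒢 D hD u hu) where
  star_involutive a := Subtype.ext <| hD.star_star a.1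
  star_mul a b := Subtype.ext <| hD.star_mul' a.1 b.1 (comp a b)
  star_add a b := Subtype.ext <| hD.star_add a.1 b.1 (a.2.trans b.2.symm)

instance : IsScalarTower ℂ (UnitFibre 𝒢 D hD u hu) (UnitFibre 𝒢 D hD u hu) :=
  ⟨fun z a b => Subtype.ext <| hD.smul_mul z a.1 b.1 (comp a b)⟩

instance : SMulCommClass ℂ (UnitFibre 𝒢 D hD u hu) (UnitFibre 𝒢 D hD u hu) :=
  ⟨fun z a b => Subtype.ext <| (hD.mul_smul' z a.1 b.1 (comp a b)).symm⟩

instance : StarModule ℂ (UnitFibre 𝒢 D hD u hu) :=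
  ⟨fun z a => Subtype.ext <| hD.star_smul z a.1⟩

instance : CStarRing (UnitFibre 𝒢 D hD u hu) where
  norm_mul_self_le a := by
    have h := hD.norm_star_mul_self a.1
    have : ‖star a * a‖ = ‖a‖ ^ 2 := h
    rw [this, sq]

noncomputable instance : NonUnitalCStarAlgebra (UnitFibre 𝒢 D hD u hu) where

end UnitFibre

end UnitFibre

section RealEstimates

/-- The fourth root `s ↦ |s|^(1/4)`, implemented by iterated square roots. -/
noncomputable def qrt (s : ℝ) : ℝ := Real.sqrt (Real.sqrt |s|)

/-- The approximating functions `F δ s = |s|^(3/4) / (|s| + δ)`. -/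
noncomputable def capF (δ s : ℝ) : ℝ := Real.sqrt |s| * qrt s / (|s| + δ)

/-- The cutoff functions `G δ s = |s| / (|s| + δ)`. -/
noncomputable def capG (δ s : ℝ) : ℝ := |s| / (|s| + δ)

lemma qrt_nonneg (s : ℝ) : 0 ≤ qrt s := Real.sqrt_nonneg _

lemma qrt_zero : qrt 0 = 0 := by simp [qrt]

lemma qrt_continuous : Continuous qrt :=
  Real.continuous_sqrt.comp (Real.continuous_sqrt.comp continuous_abs)

lemma qrt_sq (s : ℝ) : qrt s * qrt s = Real.sqrt |s| :=
  Real.mul_self_sqrt (Real.sqrt_nonneg _)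

lemma sqrt_abs_sq (s : ℝ) : Real.sqrt |s| * Real.sqrt |s| = |s| :=
  Real.mul_self_sqrt (abs_nonneg _)

lemma capF_continuous {δ : ℝ} (hδ : 0 < δ) : Continuous (capF δ) := by
  apply Continuous.div
  · exact ((Real.continuous_sqrt.comp continuous_abs).mul qrt_continuous)
  · exact continuous_abs.add continuous_const
  · intro s
    have h1 : 0 ≤ |s| := abs_nonneg s
    positivity

lemma capF_zero {δ : ℝ} (hδ : 0 < δ) : capF δ 0 = 0 := by simp [capF]

lemma capG_continuous {δ : ℝ} (hδ : 0 < δ) : Continuous (capG δ) := by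
  apply Continuous.div continuous_abs (continuous_abs.add continuous_const)
  intro s
  have h1 : 0 ≤ |s| := abs_nonneg s
  exact (add_pos_of_nonneg_of_pos h1 hδ).ne'

lemma capG_zero {δ : ℝ} (hδ : 0 < δ) : capG δ 0 = 0 := by simp [capG]

lemma capF_mul_qrt {δ : ℝ} (hδ : 0 < δ) (s : ℝ) : capF δ s * qrt s = capG δ s := by
  have h1 : 0 ≤ |s| := abs_nonneg s
  have hne : |s| + δ ≠ 0 := by positivity
  rw [capF, capG, div_mul_eq_mul_div, mul_assoc, qrt_sq, sqrt_abs_sq]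

/-- Main estimate (R1): `|s| * (1 - G δ s)^2 ≤ δ`. -/
lemma est_G (δ : ℝ) (hδ : 0 < δ) (s : ℝ) : |s * (1 - capG δ s) ^ 2| ≤ δ := by
  have h1 : 0 ≤ |s| := abs_nonneg s
  have hpos : 0 < |s| + δ := by positivity
  have h2 : 1 - capG δ s = δ / (|s| + δ) := by
    rw [capG]; field_simp; ring
  rw [abs_mul, abs_pow, h2, abs_div, abs_of_pos hδ, abs_of_pos hpos, div_pow,
    mul_div_assoc']
  rw [div_le_iff₀ (by positivity)]
  nlinarith [sq_nonneg (|s| + δ), sq_nonneg (|s| - δ), mul_nonneg h1 hδ.le,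
    mul_nonneg (mul_nonneg h1 h1) hδ.le, mul_nonneg (mul_nonneg h1 hδ.le) hδ.le]

/-- Quarter-root uniform bound (R2b, one-sided): `sqrt |s| * F δ s` is within
`qrt δ` of `qrt s`. -/
lemma est_F (δ : ℝ) (hδ : 0 < δ) (s : ℝ) :
    |Real.sqrt |s| * capF δ s - qrt s| ≤ Real.sqrt (Real.sqrt δ) := by
  have h1 : 0 ≤ |s| := abs_nonneg s
  have hpos : 0 < |s| + δ := by positivity
  set p := qrt s with hp
  set d := Real.sqrt (Real.sqrt δ) with hdd
  have hpnn : 0 ≤ p := qrt_nonneg s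
  have hdnn : 0 ≤ d := Real.sqrt_nonneg _
  have hp4 : p * p * (p * p) = |s| := by
    rw [qrt_sq, sqrt_abs_sq]
  have hd4 : d * d * (d * d) = δ := by
    rw [hdd, Real.mul_self_sqrt (Real.sqrt_nonneg _), Real.mul_self_sqrt hδ.le]
  have hkey : Real.sqrt |s| * capF δ s - p = -(p * δ / (|s| + δ)) := by
    rw [capF]
    field_simp
    rw [Real.sq_sqrt h1, hp]
    ring
  rw [hkey, abs_neg]
  have hnum : 0 ≤ p * δ := mul_nonneg hpnn hδ.le
  rw [abs_of_nonneg (by positivity)]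
  rw [div_le_iff₀ hpos]
  -- goal : p * δ ≤ d * (|s| + δ)
  rw [← hp4, ← hd4]
  rcases le_total p d with h | h
  · nlinarith [mul_le_mul_of_nonneg_right h
      (mul_nonneg (mul_nonneg hdnn hdnn) (mul_nonneg hdnn hdnn)),
      mul_nonneg (mul_nonneg (mul_nonneg hpnn hpnn) (mul_nonneg hpnn hpnn)) hdnn]
  · have h2 : d * d ≤ p * p := mul_le_mul h h hdnn hpnn
    have h3 : d * d * d ≤ p * p * p := mul_le_mul h2 h hdnn (mul_nonneg hpnn hpnn)
    nlinarith [mul_le_mul_of_nonneg_left h3 (mul_nonneg hdnn hpnn),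
      mul_nonneg (mul_nonneg hdnn hdnn) (mul_nonneg hdnn hdnn)]

/-- Cauchy estimate (R2): `|(F δ s - F δ' s) * s * (F δ s - F δ' s)|` is controlled. -/
lemma est_FF (δ δ' : ℝ) (hδ : 0 < δ) (hδ' : 0 < δ') (s : ℝ) :
    |(capF δ s - capF δ' s) * s * (capF δ s - capF δ' s)| ≤
      (Real.sqrt (Real.sqrt δ) + Real.sqrt (Real.sqrt δ')) ^ 2 := by
  have h1 : 0 ≤ |s| := abs_nonneg s
  have habs : |(capF δ s - capF δ' s) * s * (capF δ s - capF δ' s)|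
      = (Real.sqrt |s| * (capF δ s - capF δ' s)) ^ 2 := by
    rw [abs_mul, abs_mul, mul_pow, Real.sq_sqrt (abs_nonneg s),
      ← sq_abs (capF δ s - capF δ' s), sq]
    ring
  rw [habs]
  have hb : |Real.sqrt |s| * (capF δ s - capF δ' s)| ≤
      Real.sqrt (Real.sqrt δ) + Real.sqrt (Real.sqrt δ') := by
    have h2 := est_F δ hδ s
    have h3 := est_F δ' hδ' s
    have : Real.sqrt |s| * (capF δ s - capF δ' s)
        = (Real.sqrt |s| * capF δ s - qrt s) - (Real.sqrt |s| * capF δ' s - qrt s) := by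
      ring
    rw [this]
    calc |(Real.sqrt |s| * capF δ s - qrt s) - (Real.sqrt |s| * capF δ' s - qrt s)|
        ≤ |Real.sqrt |s| * capF δ s - qrt s| + |Real.sqrt |s| * capF δ' s - qrt s| :=
          abs_sub _ _
      _ ≤ _ := add_le_add h2 h3
  calc (Real.sqrt |s| * (capF δ s - capF δ' s)) ^ 2
      = |Real.sqrt |s| * (capF δ s - capF δ' s)| ^ 2 := (sq_abs _).symm
    _ ≤ (Real.sqrt (Real.sqrt δ) + Real.sqrt (Real.sqrt δ')) ^ 2 := by
        apply pow_le_pow_left₀ (abs_nonneg _) hb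

end RealEstimates

section CStarHelpers

variable {A : Type*} [NonUnitalCStarAlgebra A]

/-- `nupow a n = a^(n+1)` in a non-unital algebra. -/
def nupow (a : A) : ℕ → A
  | 0 => a
  | n + 1 => nupow a n * a

lemma cfc_pow_succ (a : A) (ha : IsSelfAdjoint a) (n : ℕ) :
    cfcₙ (fun s : ℝ => s ^ (n + 1)) a = nupow a n := by
  induction n with
  | zero => simpa [nupow] using cfcₙ_id' ℝ a
  | succ n ih =>
    have hfn : (fun s : ℝ => s ^ (n + 1 + 1)) = fun s : ℝ => s ^ (n + 1) * s := by
      funext s; ring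
    rw [hfn, cfcₙ_mul _ _ a (by fun_prop) (by simp) (by fun_prop) rfl,
      ih, cfcₙ_id' ℝ a]
    rfl

lemma cfcn_mem_of_closed (Js : Set A) (hclosed : IsClosed Js) (h0 : (0 : A) ∈ Js)
    (hadd : ∀ x ∈ Js, ∀ y ∈ Js, x + y ∈ Js)
    (hsmul : ∀ (r : ℝ), ∀ x ∈ Js, r • x ∈ Js)
    (hmulR : ∀ x ∈ Js, ∀ (y : A), x * y ∈ Js)
    (a : A) (ha : IsSelfAdjoint a) (haJ : a ∈ Js)
    (f : ℝ → ℝ) (hf : Continuous f) (hf0 : f 0 = 0) : cfcₙ f a ∈ Js := by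
  have hpow : ∀ n : ℕ, nupow a n ∈ Js := by
    intro n; induction n with
    | zero => simpa [nupow] using haJ
    | succ n ih => exact hmulR _ ih a
  have hpoly : ∀ p : Polynomial ℝ, p.coeff 0 = 0 → cfcₙ (fun s => p.eval s) a ∈ Js := by
    intro p hp0
    have heval : (fun s : ℝ => p.eval s)
        = ∑ i ∈ Finset.range (p.natDegree + 1), (fun s : ℝ => p.coeff i * s ^ i) := by
      funext s
      rw [Polynomial.eval_eq_sum_range]
      simp
    rw [heval, cfcₙ_sum _ a _ (fun i _ => by fun_prop)
      (fun i hi => by rcases i with _ | i <;> simp [hp0])]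
    refine Finset.sum_induction _ (· ∈ Js) (fun x y hx hy => hadd x hx y hy) h0
      (fun i _ => ?_)
    rcases i with _ | i
    · have : (fun s : ℝ => p.coeff 0 * s ^ 0) = fun _ : ℝ => (0 : ℝ) := by
        funext s; simp [hp0]
      rw [this, cfcₙ_const_zero]
      exact h0
    · rw [cfcₙ_const_mul _ _ a (by fun_prop) (by simp), cfc_pow_succ a ha i]
      exact hsmul _ _ (hpow i)
  -- Stone–Weierstrass approximation
  have hQ : IsCompact (quasispectrum ℝ a) :=
    NonUnitalContinuousFunctionalCalculus.isCompact_quasispectrum a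
  haveI : CompactSpace (quasispectrum ℝ a) := isCompact_iff_compactSpace.mp hQ
  rw [← hclosed.closure_eq, Metric.mem_closure_iff]
  intro ε hε
  set Q : Set ℝ := quasispectrum ℝ a with hQdef
  let F : C(Q, ℝ) := ⟨fun q => f q.1, hf.comp continuous_subtype_val⟩
  have hFmem : F ∈ closure (polynomialFunctions Q : Set C(Q, ℝ)) := by
    have htop := polynomialFunctions.topologicalClosure Q
    have h2 : F ∈ (polynomialFunctions Q).topologicalClosure := by
      rw [htop]; trivial
    have h3 : F ∈ ((polynomialFunctions Q).topologicalClosure : Set C(Q, ℝ)) := h2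
    rwa [Subalgebra.topologicalClosure_coe] at h3
  rw [Metric.mem_closure_iff] at hFmem
  obtain ⟨g, hg, hdist⟩ := hFmem (ε / 3) (by positivity)
  rw [SetLike.mem_coe, ← SetLike.mem_coe, polynomialFunctions_coe] at hg
  obtain ⟨p, rfl⟩ := hg
  have hpt : ∀ x (hx : x ∈ Q), |f x - p.eval x| ≤ dist F (Polynomial.toContinuousMapOnAlgHom Q p) := by
    intro x hx
    have h := ContinuousMap.dist_apply_le_dist (f := F)
      (g := Polynomial.toContinuousMapOnAlgHom Q p) ⟨x, hx⟩
    simpa [F, Real.dist_eq, Polynomial.toContinuousMapOnAlgHom_apply,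
      Polynomial.toContinuousMapOn_apply, Polynomial.toContinuousMap_apply] using h
  have h0Q : (0 : ℝ) ∈ Q := quasispectrum.zero_mem ℝ a
  have hc0 : |p.eval 0| ≤ ε / 3 := by
    have := hpt 0 h0Q
    rw [hf0] at this
    simpa using this.trans hdist.le
  set p' : Polynomial ℝ := p - Polynomial.C (p.eval 0) with hp'def
  have hp'0 : p'.coeff 0 = 0 := by
    simp [hp'def, Polynomial.coeff_zero_eq_eval_zero]
  refine ⟨cfcₙ (fun s => p'.eval s) a, hpoly p' hp'0, ?_⟩
  have hev0 : (fun s : ℝ => p'.eval s) 0 = 0 := by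
    show Polynomial.eval (0 : ℝ) p' = 0
    rw [← Polynomial.coeff_zero_eq_eval_zero]; exact hp'0
  rw [dist_eq_norm, ← cfcₙ_sub f (fun s => p'.eval s) a hf.continuousOn hf0
    (Polynomial.continuous p').continuousOn hev0]
  have hb : ∀ x ∈ Q, ‖f x - p'.eval x‖ ≤ 2 * (ε / 3) := by
    intro x hx
    have h1 := hpt x hx
    have hxval : p'.eval x = p.eval x - p.eval 0 := by simp [hp'def]
    rw [Real.norm_eq_abs, hxval]
    have : f x - (p.eval x - p.eval 0) = (f x - p.eval x) + p.eval 0 := by ring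
    rw [this]
    calc |(f x - p.eval x) + p.eval 0| ≤ |f x - p.eval x| + |p.eval 0| := abs_add_le _ _
      _ ≤ ε / 3 + ε / 3 := add_le_add (h1.trans hdist.le) hc0
      _ = 2 * (ε / 3) := by ring
  have := norm_cfcₙ_le (a := a) (f := fun s => f s - p'.eval s) hb
  linarith

lemma cfc_expand (a : A) (ha : IsSelfAdjoint a) (f : ℝ → ℝ) (hf : Continuous f)
    (hf0 : f 0 = 0) :
    a - a * cfcₙ f a - cfcₙ f a * a + cfcₙ f a * a * cfcₙ f a
      = cfcₙ (fun s => s * (1 - f s) ^ 2) a := by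
  have h1 : cfcₙ (fun s : ℝ => s * f s) a = a * cfcₙ f a := by
    rw [cfcₙ_mul _ _ a (by fun_prop) rfl hf.continuousOn hf0, cfcₙ_id' ℝ a]
  have h2 : cfcₙ (fun s : ℝ => f s * s) a = cfcₙ f a * a := by
    rw [cfcₙ_mul _ _ a hf.continuousOn hf0 (by fun_prop) rfl, cfcₙ_id' ℝ a]
  have h3 : cfcₙ (fun s : ℝ => f s * s * f s) a = cfcₙ f a * a * cfcₙ f a := by
    rw [cfcₙ_mul _ _ a (by fun_prop) (by simp [hf0]) hf.continuousOn hf0, h2]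
  have hfn : (fun s : ℝ => s * (1 - f s) ^ 2)
      = fun s : ℝ => (s - s * f s - f s * s) + f s * s * f s := by
    funext s; ring
  rw [hfn, cfcₙ_add _ _ a (by fun_prop) (by simp [hf0]) (by fun_prop) (by simp [hf0]),
    cfcₙ_sub _ _ a (by fun_prop) (by simp) (by fun_prop) (by simp [hf0]),
    cfcₙ_sub _ _ a (by fun_prop) rfl (by fun_prop) (by simp [hf0]),
    h1, h2, h3, cfcₙ_id' ℝ a]

lemma cfc_sandwich (a : A) (ha : IsSelfAdjoint a) (g : ℝ → ℝ) (hg : Continuous g)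
    (hg0 : g 0 = 0) :
    cfcₙ g a * a * cfcₙ g a = cfcₙ (fun s => g s * s * g s) a := by
  have h2 : cfcₙ (fun s : ℝ => g s * s) a = cfcₙ g a * a := by
    rw [cfcₙ_mul _ _ a hg.continuousOn hg0 (by fun_prop) rfl, cfcₙ_id' ℝ a]
  rw [cfcₙ_mul _ _ a (by fun_prop) (by simp [hg0]) hg.continuousOn hg0, h2]

end CStarHelpers

section MainSetup

variable {H K T BB CC EE : Type*}
  [TopologicalSpace H] [TopologicalSpace K] [TopologicalSpace T]
  [TopologicalSpace BB] [TopologicalSpace CC] [TopologicalSpace EE]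
  (S : EquivSetup H K T BB CC EE) (hS : S.IsFellEquiv)
  (t : T) (k : K) (htk : S.Teq.σ t = S.𝒢K.rng k)

/-- The unit `s(k)`. -/
def uu : K := S.𝒢K.src k

lemma uu_unit : S.𝒢K.IsUnit (uu S k) := S.𝒢K.src_src k

include hS htk

lemma sigma_tk : S.Teq.σ (S.Teq.ract t k) = uu S k := hS.equivT.σ_ract t k htk

lemma rho_tk : S.Teq.ρ (S.Teq.ract t k) = S.Teq.ρ t := hS.equivT.ρ_ract t k htk

lemma ract_tk_u : S.Teq.ract (S.Teq.ract t k) (uu S k) = S.Teq.ract t k := by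
  have h := hS.equivT.ract_id (S.Teq.ract t k)
  rw [sigma_tk S hS t k htk] at h
  exact h

lemma tauK_tk :
    S.Teq.τK (S.Teq.ract t k) (S.Teq.ract t k) = uu S k := by
  have h1 := hS.equivT.τK_rng (S.Teq.ract t k) (S.Teq.ract t k) rfl
  have h2 := hS.equivT.τK_spec (S.Teq.ract t k) (S.Teq.ract t k) rfl
  have h3 := hS.equivT.free_r (S.Teq.ract t k) _ h1.symm h2
  rw [h3, sigma_tk S hS t k htk]

lemma ract_tk_invk : S.Teq.ract (S.Teq.ract t k) (S.𝒢K.inv k) = t := by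
  have hcomp : S.𝒢K.src k = S.𝒢K.rng (S.𝒢K.inv k) := (S.𝒢K.rng_inv k).symm
  have h := hS.equivT.ract_mul t k (S.𝒢K.inv k) htk hcomp
  rw [S.𝒢K.mul_inv k, ← htk, hS.equivT.ract_id t] at h
  exact h.symm

lemma src_tauK (t₁ t₂ : T) (h : S.Teq.ρ t₁ = S.Teq.ρ t₂) :
    S.𝒢K.src (S.Teq.τK t₁ t₂) = S.Teq.σ t₂ := by
  have h1 := hS.equivT.τK_rng t₁ t₂ h
  have h2 := hS.equivT.σ_ract t₁ (S.Teq.τK t₁ t₂) h1.symm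
  rw [hS.equivT.τK_spec t₁ t₂ h] at h2
  rw [← h2]

/-- The C*-algebra `C_{s(k)}`. -/
abbrev AK := UnitFibre S.𝒢K S.DC hS.fellC (uu S k) (uu_unit S k)

/-- The Banach space `E_{t·k}`. -/
abbrev XE := Fibre S.FE.bund hS.bund (S.Teq.ract t k)

lemma comp_xd (x : XE S hS t k) (d : AK S hS k) :
    S.Teq.σ (S.q x.1) = S.𝒢K.rng (S.DC.proj d.1) := by
  have hx : S.q x.1 = S.Teq.ract t k := x.2
  rw [hx, d.2, sigma_tk S hS t k htk, (uu_unit S k).rng_eq]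

/-- The right action of `AK` on `XE`. -/
def actX (x : XE S hS t k) (d : AK S hS k) : XE S hS t k :=
  ⟨S.FE.ract x.1 d.1, by
    have hx : S.q x.1 = S.Teq.ract t k := x.2
    have h := hS.proj_ract x.1 d.1 (comp_xd S hS t k htk x d)
    have : S.q (S.FE.ract x.1 d.1) = S.Teq.ract t k := by
      rw [h, hx, d.2, ract_tk_u S hS t k htk]
    exact this⟩

lemma comp_rho (x y : XE S hS t k) :
    S.Teq.ρ (S.q x.1) = S.Teq.ρ (S.q y.1) := by
  have hx : S.q x.1 = S.Teq.ract t k := x.2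
  have hy : S.q y.1 = S.Teq.ract t k := y.2
  rw [hx, hy]

lemma comp_sigma (x y : XE S hS t k) :
    S.Teq.σ (S.q x.1) = S.Teq.σ (S.q y.1) := by
  have hx : S.q x.1 = S.Teq.ract t k := x.2
  have hy : S.q y.1 = S.Teq.ract t k := y.2
  rw [hx, hy]

/-- The `AK`-valued inner product on `XE`. -/
def innerX (x y : XE S hS t k) : AK S hS k :=
  ⟨S.FE.rinner x.1 y.1, by
    have hx : S.q x.1 = S.Teq.ract t k := x.2
    have hy : S.q y.1 = S.Teq.ract t k := y.2
    rw [hS.proj_rinner x.1 y.1 (comp_rho S hS t k htk x y), hx, hy,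
      tauK_tk S hS t k htk]⟩

end MainSetup

section MainSetup2

variable {H K T BB CC EE : Type*}
  [TopologicalSpace H] [TopologicalSpace K] [TopologicalSpace T]
  [TopologicalSpace BB] [TopologicalSpace CC] [TopologicalSpace EE]
  (S : EquivSetup H K T BB CC EE) (hS : S.IsFellEquiv)
  (t : T) (k : K) (htk : S.Teq.σ t = S.𝒢K.rng k)

include hS htk

lemma act_add_left (x y : XE S hS t k) (d : AK S hS k) :
    actX S hS t k htk (x + y) d = actX S hS t k htk x d + actX S hS t k htk y d :=
  Subtype.ext <| hS.ract_add x.1 y.1 d.1 (x.2.trans y.2.symm) (comp_xd S hS t k htk x d)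

lemma act_add_right (x : XE S hS t k) (d d' : AK S hS k) :
    actX S hS t k htk x (d + d') = actX S hS t k htk x d + actX S hS t k htk x d' :=
  Subtype.ext <| hS.add_ract x.1 d.1 d'.1 (d.2.trans d'.2.symm) (comp_xd S hS t k htk x d)

lemma act_smul_left (z : ℂ) (x : XE S hS t k) (d : AK S hS k) :
    actX S hS t k htk (z • x) d = z • actX S hS t k htk x d :=
  Subtype.ext <| hS.smul_ract z x.1 d.1 (comp_xd S hS t k htk x d)

lemma act_smul_right (z : ℂ) (x : XE S hS t k) (d : AK S hS k) :
    actX S hS t k htk x (z • d) = z • actX S hS t k htk x d :=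
  Subtype.ext <| hS.ract_smul z x.1 d.1 (comp_xd S hS t k htk x d)

lemma act_mul (x : XE S hS t k) (d d' : AK S hS k) :
    actX S hS t k htk x (d * d') = actX S hS t k htk (actX S hS t k htk x d) d' :=
  Subtype.ext <| hS.ract_ract x.1 d.1 d'.1 (comp_xd S hS t k htk x d)
    (UnitFibre.comp d d')

lemma norm_act_le (x : XE S hS t k) (d : AK S hS k) :
    ‖actX S hS t k htk x d‖ ≤ ‖x‖ * ‖d‖ :=
  hS.norm_ract_le x.1 d.1 (comp_xd S hS t k htk x d)

lemma inner_add_left (x y w : XE S hS t k) :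
    innerX S hS t k htk (x + y) w = innerX S hS t k htk x w + innerX S hS t k htk y w :=
  Subtype.ext <| hS.rinner_add_left x.1 y.1 w.1 (x.2.trans y.2.symm)
    (comp_rho S hS t k htk x w)

lemma inner_add_right (x y w : XE S hS t k) :
    innerX S hS t k htk x (y + w) = innerX S hS t k htk x y + innerX S hS t k htk x w :=
  Subtype.ext <| hS.rinner_add_right x.1 y.1 w.1 (y.2.trans w.2.symm)
    (comp_rho S hS t k htk x y)

lemma inner_smul_left (z : ℂ) (x y : XE S hS t k) :
    innerX S hS t k htk (z • x) y = (starRingEnd ℂ z) • innerX S hS t k htk x y :=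
  Subtype.ext <| hS.rinner_smul_left z x.1 y.1 (comp_rho S hS t k htk x y)

lemma inner_smul_right (z : ℂ) (x y : XE S hS t k) :
    innerX S hS t k htk x (z • y) = z • innerX S hS t k htk x y :=
  Subtype.ext <| hS.rinner_smul_right z x.1 y.1 (comp_rho S hS t k htk x y)

lemma inner_star (x y : XE S hS t k) :
    star (innerX S hS t k htk x y) = innerX S hS t k htk y x :=
  Subtype.ext <| hS.rinner_star x.1 y.1 (comp_rho S hS t k htk x y)

lemma inner_act_right (x y : XE S hS t k) (d : AK S hS k) :
    innerX S hS t k htk x (actX S hS t k htk y d) = innerX S hS t k htk x y * d :=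
  Subtype.ext <| hS.rinner_ract x.1 y.1 d.1 (comp_rho S hS t k htk x y)
    (comp_xd S hS t k htk y d)

lemma norm_inner_self (x : XE S hS t k) :
    ‖innerX S hS t k htk x x‖ = ‖x‖ ^ 2 :=
  hS.norm_rinner_self x.1

lemma inner_self_sa (x : XE S hS t k) : IsSelfAdjoint (innerX S hS t k htk x x) :=
  inner_star S hS t k htk x x

lemma act_sub_left (x y : XE S hS t k) (d : AK S hS k) :
    actX S hS t k htk (x - y) d = actX S hS t k htk x d - actX S hS t k htk y d := by
  rw [sub_eq_add_neg, sub_eq_add_neg, act_add_left]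
  congr 1
  rw [← neg_one_smul ℂ y, act_smul_left, neg_one_smul ℂ]

lemma act_sub_right (x : XE S hS t k) (d d' : AK S hS k) :
    actX S hS t k htk x (d - d') = actX S hS t k htk x d - actX S hS t k htk x d' := by
  rw [sub_eq_add_neg, sub_eq_add_neg, act_add_right]
  congr 1
  rw [← neg_one_smul ℂ d', act_smul_right, neg_one_smul ℂ]

lemma inner_sub_right (x y w : XE S hS t k) :
    innerX S hS t k htk x (y - w)
      = innerX S hS t k htk x y - innerX S hS t k htk x w := by
  rw [sub_eq_add_neg, sub_eq_add_neg, inner_add_right]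
  congr 1
  rw [← neg_one_smul ℂ w, inner_smul_right, neg_one_smul ℂ]

lemma inner_sub_left (x y w : XE S hS t k) :
    innerX S hS t k htk (x - y) w
      = innerX S hS t k htk x w - innerX S hS t k htk y w := by
  rw [sub_eq_add_neg, sub_eq_add_neg, inner_add_left]
  congr 1
  rw [← neg_one_smul ℂ y, inner_smul_left, map_neg, map_one, neg_one_smul]

lemma inner_zero_right (x : XE S hS t k) : innerX S hS t k htk x 0 = 0 := by
  have h : ((0 : ℂ) • (0 : XE S hS t k)) = 0 := zero_smul ℂ _
  calc innerX S hS t k htk x 0 = innerX S hS t k htk x ((0 : ℂ) • 0) := by rw [h]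
    _ = (0 : ℂ) • innerX S hS t k htk x 0 := inner_smul_right S hS t k htk 0 x 0
    _ = 0 := zero_smul ℂ _

lemma inner_zero_left (x : XE S hS t k) : innerX S hS t k htk 0 x = 0 := by
  rw [← inner_star, inner_zero_right, star_zero]

lemma inner_act_left (x y : XE S hS t k) (d : AK S hS k) :
    innerX S hS t k htk (actX S hS t k htk y d) x
      = star d * innerX S hS t k htk y x := by
  rw [← inner_star, inner_act_right, star_mul, inner_star]

end MainSetup2

section MainSetup3

variable {H K T BB CC EE : Type*}
  [TopologicalSpace H] [TopologicalSpace K] [TopologicalSpace T]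
  [TopologicalSpace BB] [TopologicalSpace CC] [TopologicalSpace EE]
  (S : EquivSetup H K T BB CC EE) (hS : S.IsFellEquiv)
  (t : T) (k : K) (htk : S.Teq.σ t = S.𝒢K.rng k)

include hS htk

lemma norm_inner_basic (x y : XE S hS t k) :
    ‖innerX S hS t k htk x y‖ ≤ 3 * (‖x‖ + ‖y‖) ^ 2 := by
  have hsum : ∀ u v : XE S hS t k,
      innerX S hS t k htk u v + innerX S hS t k htk v u
        = innerX S hS t k htk (u + v) (u + v)
          - innerX S hS t k htk u u - innerX S hS t k htk v v := by
    intro u v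
    rw [inner_add_left, inner_add_right, inner_add_right]
    abel
  have hnormsum : ∀ u v : XE S hS t k,
      ‖innerX S hS t k htk u v + innerX S hS t k htk v u‖
        ≤ (‖u‖ + ‖v‖) ^ 2 + ‖u‖ ^ 2 + ‖v‖ ^ 2 := by
    intro u v
    rw [hsum u v]
    have h1 : ‖innerX S hS t k htk (u + v) (u + v)‖ ≤ (‖u‖ + ‖v‖) ^ 2 := by
      rw [norm_inner_self]
      exact pow_le_pow_left₀ (norm_nonneg _) (norm_add_le u v) 2
    calc ‖innerX S hS t k htk (u + v) (u + v) - innerX S hS t k htk u u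
          - innerX S hS t k htk v v‖
        ≤ ‖innerX S hS t k htk (u + v) (u + v) - innerX S hS t k htk u u‖
          + ‖innerX S hS t k htk v v‖ := norm_sub_le _ _
      _ ≤ ‖innerX S hS t k htk (u + v) (u + v)‖ + ‖innerX S hS t k htk u u‖
          + ‖innerX S hS t k htk v v‖ := by
            have := norm_sub_le (innerX S hS t k htk (u + v) (u + v))
              (innerX S hS t k htk u u)
            linarith
      _ ≤ (‖u‖ + ‖v‖) ^ 2 + ‖u‖ ^ 2 + ‖v‖ ^ 2 := by
            rw [norm_inner_self S hS t k htk u, norm_inner_self S hS t k htk v]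
            linarith [h1]
  -- imaginary-rotation trick
  have hIrot : innerX S hS t k htk x (Complex.I • y)
      + innerX S hS t k htk (Complex.I • y) x
      = Complex.I • (innerX S hS t k htk x y - innerX S hS t k htk y x) := by
    rw [inner_smul_right, inner_smul_left, Complex.conj_I, smul_sub]
    rw [neg_smul]
    abel
  have hnormI : ‖innerX S hS t k htk x y - innerX S hS t k htk y x‖
      ≤ (‖x‖ + ‖y‖) ^ 2 + ‖x‖ ^ 2 + ‖y‖ ^ 2 := by
    have h2 := hnormsum x (Complex.I • y)
    rw [hIrot] at h2
    rw [norm_smul, Complex.norm_I, one_mul] at h2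
    rwa [norm_smul, Complex.norm_I, one_mul] at h2
  have h2 : (2 : ℂ) • innerX S hS t k htk x y
      = (innerX S hS t k htk x y + innerX S hS t k htk y x)
        + (innerX S hS t k htk x y - innerX S hS t k htk y x) := by
    have : (2 : ℂ) = (1 : ℂ) + 1 := by norm_num
    rw [this, add_smul, one_smul]
    abel
  have h3 : (2 : ℝ) * ‖innerX S hS t k htk x y‖
      ≤ 2 * ((‖x‖ + ‖y‖) ^ 2 + ‖x‖ ^ 2 + ‖y‖ ^ 2) := by
    have h4 : ‖(2 : ℂ) • innerX S hS t k htk x y‖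
        = 2 * ‖innerX S hS t k htk x y‖ := by
      rw [norm_smul]; norm_num
    have h5 := norm_add_le (innerX S hS t k htk x y + innerX S hS t k htk y x)
      (innerX S hS t k htk x y - innerX S hS t k htk y x)
    rw [← h2, h4] at h5
    have := hnormsum x y
    linarith
  have hx2 : ‖x‖ ^ 2 ≤ (‖x‖ + ‖y‖) ^ 2 := by nlinarith [norm_nonneg x, norm_nonneg y]
  have hy2 : ‖y‖ ^ 2 ≤ (‖x‖ + ‖y‖) ^ 2 := by nlinarith [norm_nonneg x, norm_nonneg y]
  linarith

lemma norm_inner_le (x y : XE S hS t k) :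
    ‖innerX S hS t k htk x y‖ ≤ 12 * (‖x‖ * ‖y‖) := by
  rcases eq_or_ne x 0 with rfl | hx
  · rw [inner_zero_left, norm_zero]
    positivity
  rcases eq_or_ne y 0 with rfl | hy
  · rw [inner_zero_right, norm_zero]
    positivity
  have hxn : 0 < ‖x‖ := norm_pos_iff.mpr hx
  have hyn : 0 < ‖y‖ := norm_pos_iff.mpr hy
  set lam : ℝ := Real.sqrt (‖y‖ / ‖x‖) with hlam
  have hlampos : 0 < lam := Real.sqrt_pos.mpr (by positivity)
  have hlamsq : lam ^ 2 = ‖y‖ / ‖x‖ := Real.sq_sqrt (by positivity)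
  have hinv : ((lam : ℂ)) * ((lam⁻¹ : ℝ) : ℂ) = 1 := by
    rw [← Complex.ofReal_mul, mul_inv_cancel₀ hlampos.ne']
    norm_num
  have heq : innerX S hS t k htk (((lam : ℝ) : ℂ) • x) (((lam⁻¹ : ℝ) : ℂ) • y)
      = innerX S hS t k htk x y := by
    rw [inner_smul_left, inner_smul_right, smul_smul, Complex.conj_ofReal, hinv, one_smul]
  have hb := norm_inner_basic S hS t k htk (((lam : ℝ) : ℂ) • x) (((lam⁻¹ : ℝ) : ℂ) • y)
  rw [heq] at hb
  rw [norm_smul, norm_smul, Complex.norm_real, Complex.norm_real,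
    Real.norm_eq_abs, Real.norm_eq_abs, abs_of_pos hlampos,
    abs_of_pos (inv_pos.mpr hlampos)] at hb
  have hlx : (lam * ‖x‖) * (lam * ‖x‖) = ‖x‖ * ‖y‖ * (lam ^ 2 * ‖x‖ / ‖y‖) := by
    field_simp
  have hkey : (lam * ‖x‖ + lam⁻¹ * ‖y‖) ^ 2 = 4 * (‖x‖ * ‖y‖) := by
    have h1 : lam * ‖x‖ * (lam⁻¹ * ‖y‖) = ‖x‖ * ‖y‖ := by
      field_simp
    have h2 : (lam * ‖x‖) ^ 2 = ‖x‖ * ‖y‖ := by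
      rw [mul_pow, hlamsq]
      field_simp
    have h3 : (lam⁻¹ * ‖y‖) ^ 2 = ‖x‖ * ‖y‖ := by
      rw [mul_pow, inv_pow, hlamsq]
      field_simp
    nlinarith [h1, h2, h3]
  rw [hkey] at hb
  linarith

lemma inner_expand (x : XE S hS t k) (d : AK S hS k) :
    innerX S hS t k htk (x - actX S hS t k htk x d) (x - actX S hS t k htk x d)
      = innerX S hS t k htk x x - innerX S hS t k htk x x * d
        - star d * innerX S hS t k htk x x
        + star d * innerX S hS t k htk x x * d := by
  rw [inner_sub_left, inner_sub_right, inner_sub_right,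
    inner_act_right, inner_act_left, inner_act_left, inner_act_right,
    mul_assoc (star d) (innerX S hS t k htk x x) d]
  abel

lemma approx_self (x : XE S hS t k) (δ : ℝ) (hδ : 0 < δ) :
    ‖x - actX S hS t k htk x (cfcₙ (capG δ) (innerX S hS t k htk x x))‖ ^ 2 ≤ δ := by
  set a := innerX S hS t k htk x x with ha_def
  have ha : IsSelfAdjoint a := inner_self_sa S hS t k htk x
  set d := cfcₙ (capG δ) a with hd_def
  have hd : IsSelfAdjoint d := cfcₙ_predicate _ a
  have h1 : ‖x - actX S hS t k htk x d‖ ^ 2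
      = ‖innerX S hS t k htk (x - actX S hS t k htk x d)
          (x - actX S hS t k htk x d)‖ :=
    (norm_inner_self S hS t k htk _).symm
  rw [h1, inner_expand, hd.star_eq, ← ha_def, hd_def,
    cfc_expand a ha (capG δ) (capG_continuous hδ) (capG_zero hδ)]
  exact norm_cfcₙ_le fun s _ => by
    rw [Real.norm_eq_abs]
    exact est_G δ hδ s

lemma cauchy_est (x : XE S hS t k) (δ δ' : ℝ) (hδ : 0 < δ) (hδ' : 0 < δ') :
    ‖actX S hS t k htk x (cfcₙ (capF δ) (innerX S hS t k htk x x))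
      - actX S hS t k htk x (cfcₙ (capF δ') (innerX S hS t k htk x x))‖ ^ 2
      ≤ (Real.sqrt (Real.sqrt δ) + Real.sqrt (Real.sqrt δ')) ^ 2 := by
  set a := innerX S hS t k htk x x with ha_def
  have ha : IsSelfAdjoint a := inner_self_sa S hS t k htk x
  set e := cfcₙ (capF δ) a - cfcₙ (capF δ') a with he_def
  have hesub : e = cfcₙ (fun s => capF δ s - capF δ' s) a := by
    rw [he_def, cfcₙ_sub _ _ a ((capF_continuous hδ).continuousOn) (capF_zero hδ)
      ((capF_continuous hδ').continuousOn) (capF_zero hδ')]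
  have hse : IsSelfAdjoint e := by
    rw [hesub]; exact cfcₙ_predicate _ a
  rw [← act_sub_right]
  have h1 : ‖actX S hS t k htk x e‖ ^ 2
      = ‖innerX S hS t k htk (actX S hS t k htk x e) (actX S hS t k htk x e)‖ :=
    (norm_inner_self S hS t k htk _).symm
  rw [h1, inner_act_left, inner_act_right, hse.star_eq, ← ha_def, ← mul_assoc]
  rw [hesub, cfc_sandwich a ha (fun s => capF δ s - capF δ' s) ((capF_continuous hδ).sub (capF_continuous hδ'))
    (by simp only [capF_zero hδ, capF_zero hδ', sub_zero])]
  exact norm_cfcₙ_le fun s _ => by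
    rw [Real.norm_eq_abs]
    exact est_FF δ δ' hδ hδ' s

end MainSetup3

section MainSetup4

variable {G B : Type*} [TopologicalSpace G] [TopologicalSpace B]

lemma UnitFibre.dist_def {𝒢 : GroupoidStr G} {D : FellBundleData G B}
    {hD : IsFellBundle 𝒢 D} {u : G} {hu : 𝒢.IsUnit u}
    (a b : UnitFibre 𝒢 D hD u hu) : dist a b = D.norm (D.sub a.1 b.1) := by
  rw [dist_eq_norm]; rfl

lemma norm_le_of_sq_le {E : Type*} [SeminormedAddCommGroup E] {w : E} {c : ℝ}
    (hc : 0 ≤ c) (h : ‖w‖ ^ 2 ≤ c ^ 2) : ‖w‖ ≤ c := by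
  nlinarith [norm_nonneg w]

end MainSetup4

section MainSetup5

variable {H K T BB CC EE : Type*}
  [TopologicalSpace H] [TopologicalSpace K] [TopologicalSpace T]
  [TopologicalSpace BB] [TopologicalSpace CC] [TopologicalSpace EE]
  (S : EquivSetup H K T BB CC EE) (hS : S.IsFellEquiv)
  (J : Set CC) (hJ : IsFellIdeal S.𝒢K S.DC J)
  (t : T) (k : K) (htk : S.Teq.σ t = S.𝒢K.rng k)

/-- The fibre of the ideal over the unit `s(k)`, inside the C*-algebra `AK`. -/
def J0 : Set (AK S hS k) := {d | d.1 ∈ J}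

/-- The generating set `E_{t·k}·J_{s(k)}` inside `XE`. -/
def Pset : Set (XE S hS t k) :=
  {w | ∃ x : XE S hS t k, ∃ d : AK S hS k, d.1 ∈ J ∧ w = actX S hS t k htk x d}

include hJ

lemma J0_closed : IsClosed (J0 S hS J k) := by
  refine IsSeqClosed.isClosed ?_
  intro dseq d hmem hlim
  have hcl := (hJ.fellSubbundle.subbundle.fib_closedSubspace (uu S k)).closed
  have hten : Tendsto (fun n => S.DC.toBanachBundleData.norm
      (S.DC.toBanachBundleData.sub (dseq n).1 d.1)) atTop (𝓝 0) := by
    have h2 := tendsto_iff_dist_tendsto_zero.mp hlim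
    exact h2.congr fun n => by rw [dist_eq_norm]; rfl
  exact (hcl (fun n => (dseq n).1) d.1 (fun n => ⟨hmem n, (dseq n).2⟩) d.2 hten).1

lemma J0_zero : (0 : AK S hS k) ∈ J0 S hS J k :=
  ((hJ.fellSubbundle.subbundle.fib_closedSubspace (uu S k)).zero_mem).1

lemma J0_add {x y : AK S hS k} (hx : x ∈ J0 S hS J k) (hy : y ∈ J0 S hS J k) :
    x + y ∈ J0 S hS J k :=
  ((hJ.fellSubbundle.subbundle.fib_closedSubspace (uu S k)).add_mem
    x.1 ⟨hx, x.2⟩ y.1 ⟨hy, y.2⟩).1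

lemma J0_smulC (z : ℂ) {x : AK S hS k} (hx : x ∈ J0 S hS J k) :
    z • x ∈ J0 S hS J k :=
  ((hJ.fellSubbundle.subbundle.fib_closedSubspace (uu S k)).smul_mem
    z x.1 ⟨hx, x.2⟩).1

lemma J0_smulR (r : ℝ) {x : AK S hS k} (hx : x ∈ J0 S hS J k) :
    r • x ∈ J0 S hS J k := by
  have h : r • x = ((r : ℂ)) • x := rfl
  rw [h]
  exact J0_smulC S hS J hJ k (r : ℂ) hx

lemma J0_mulL {x : AK S hS k} (hx : x ∈ J0 S hS J k) (y : AK S hS k) :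
    x * y ∈ J0 S hS J k :=
  hJ.mul_mem_left x.1 y.1 (UnitFibre.comp x y) hx

lemma J0_mulR (x : AK S hS k) {y : AK S hS k} (hy : y ∈ J0 S hS J k) :
    x * y ∈ J0 S hS J k :=
  hJ.mul_mem_right x.1 y.1 (UnitFibre.comp x y) hy

include hS htk

lemma inner_span_mem (v : XE S hS t k) {w : XE S hS t k}
    (hw : w ∈ Submodule.span ℂ (Pset S hS J t k htk)) :
    innerX S hS t k htk v w ∈ J0 S hS J k := by
  induction hw using Submodule.span_induction with
  | mem w hwP =>
    obtain ⟨x, d, hdJ, rfl⟩ := hwP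
    rw [inner_act_right]
    exact J0_mulR S hS J hJ k _ hdJ
  | zero =>
    rw [inner_zero_right]
    exact J0_zero S hS J hJ k
  | add w₁ w₂ _ _ h₁ h₂ =>
    rw [inner_add_right]
    exact J0_add S hS J hJ k h₁ h₂
  | smul z w _ h =>
    rw [inner_smul_right]
    exact J0_smulC S hS J hJ k z h

lemma factor_mem (z : XE S hS t k)
    (hz : z ∈ closure ((Submodule.span ℂ (Pset S hS J t k htk)) : Set (XE S hS t k))) :
    ∃ (y : XE S hS t k) (b : AK S hS k), b.1 ∈ J ∧ z = actX S hS t k htk y b := by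
  classical
  -- the inner product of `z` with itself lies in the ideal fibre
  have haJ : innerX S hS t k htk z z ∈ J0 S hS J k := by
    have hsub : innerX S hS t k htk z z ∈ closure (J0 S hS J k) := by
      rw [Metric.mem_closure_iff]
      intro ε hε
      rw [Metric.mem_closure_iff] at hz
      obtain ⟨w, hwmem, hwd⟩ := hz (ε / (12 * (‖z‖ + 1))) (by positivity)
      refine ⟨innerX S hS t k htk z w, inner_span_mem S hS J hJ t k htk z hwmem, ?_⟩
      have h0 : dist (innerX S hS t k htk z z) (innerX S hS t k htk z w)
          = ‖innerX S hS t k htk z (z - w)‖ := by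
        rw [dist_eq_norm, ← inner_sub_right]
      rw [h0]
      have h1 : ‖innerX S hS t k htk z (z - w)‖ ≤ 12 * (‖z‖ * ‖z - w‖) :=
        norm_inner_le S hS t k htk z (z - w)
      have h2 : ‖z - w‖ = dist z w := (dist_eq_norm z w).symm
      have h3 : 12 * (‖z‖ * ‖z - w‖) ≤ 12 * ((‖z‖ + 1) * dist z w) := by
        rw [h2]
        nlinarith [dist_nonneg (x := z) (y := w), norm_nonneg z]
      have h4 : 12 * ((‖z‖ + 1) * dist z w)
          < 12 * ((‖z‖ + 1) * (ε / (12 * (‖z‖ + 1)))) := by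
        have hpos : (0 : ℝ) < ‖z‖ + 1 := by positivity
        have := mul_lt_mul_of_pos_left hwd hpos
        linarith
      have h5 : 12 * ((‖z‖ + 1) * (ε / (12 * (‖z‖ + 1)))) = ε := by
        field_simp
      linarith
    rwa [(J0_closed S hS J hJ k).closure_eq] at hsub
  set a := innerX S hS t k htk z z with ha_def
  have ha : IsSelfAdjoint a := inner_self_sa S hS t k htk z
  -- the cube-root-style element `b`
  set b := cfcₙ qrt a with hb_def
  have hbJ : b ∈ J0 S hS J k := by
    refine cfcn_mem_of_closed _ (J0_closed S hS J hJ k) (J0_zero S hS J hJ k)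
      (fun x hx y hy => J0_add S hS J hJ k hx hy)
      (fun r x hx => J0_smulR S hS J hJ k r hx)
      (fun x hx y => J0_mulL S hS J hJ k hx y)
      a ha haJ qrt qrt_continuous qrt_zero
  -- the approximating sequence
  set dd : ℕ → ℝ := fun n => 1 / ((n : ℝ) + 1) with hdd_def
  have hddpos : ∀ n, 0 < dd n := fun n => by positivity
  set qq : ℕ → ℝ := fun n => Real.sqrt (Real.sqrt (dd n)) with hqq_def
  have hqqnn : ∀ n, 0 ≤ qq n := fun n => Real.sqrt_nonneg _
  have hqqmono : ∀ {N n : ℕ}, N ≤ n → qq n ≤ qq N := by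
    intro N n hNn
    apply Real.sqrt_le_sqrt
    apply Real.sqrt_le_sqrt
    apply one_div_le_one_div_of_le (by positivity)
    exact_mod_cast Nat.add_le_add_right hNn 1
  set yseq : ℕ → XE S hS t k := fun n => actX S hS t k htk z (cfcₙ (capF (dd n)) a)
    with hyseq_def
  have hcauchy : CauchySeq yseq := by
    refine cauchySeq_of_le_tendsto_0 (fun N => 2 * qq N) (fun n m N hn hm => ?_) ?_
    · rw [dist_eq_norm]
      have hest := cauchy_est S hS t k htk z (dd n) (dd m) (hddpos n) (hddpos m)
      rw [← ha_def] at hest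
      have h1 : qq n + qq m ≤ 2 * qq N := by
        have ha1 := hqqmono hn
        have ha2 := hqqmono hm
        linarith
      refine norm_le_of_sq_le (by positivity) (hest.trans ?_)
      have h2 : (0:ℝ) ≤ qq n + qq m := by positivity
      exact pow_le_pow_left₀ h2 h1 2
    · have h1 : Tendsto dd atTop (𝓝 0) := tendsto_one_div_add_atTop_nhds_zero_nat
      have h2 : Tendsto qq atTop (𝓝 0) := by
        have hc : Continuous (fun s : ℝ => Real.sqrt (Real.sqrt s)) :=
          Real.continuous_sqrt.comp Real.continuous_sqrt
        have := (hc.tendsto 0).comp h1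
        simp only [Real.sqrt_zero] at this; exact this
      have := h2.const_mul (2 : ℝ)
      simpa using this
  obtain ⟨y, hy⟩ := cauchySeq_tendsto_of_complete hcauchy
  refine ⟨y, b, hbJ, ?_⟩
  -- identification of the limit
  have claim2 : ∀ n, actX S hS t k htk (yseq n) b
      = actX S hS t k htk z (cfcₙ (capG (dd n)) a) := by
    intro n
    rw [hyseq_def]
    simp only
    rw [← act_mul]
    congr 1
    rw [hb_def, ← cfcₙ_mul _ _ a ((capF_continuous (hddpos n)).continuousOn)
      (capF_zero (hddpos n)) (qrt_continuous.continuousOn) qrt_zero]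
    exact cfcₙ_congr fun s _ => capF_mul_qrt (hddpos n) s
  have claim1 : Tendsto (fun n => actX S hS t k htk (yseq n) b) atTop
      (𝓝 (actX S hS t k htk y b)) := by
    rw [tendsto_iff_dist_tendsto_zero]
    have hbnd : ∀ n, dist (actX S hS t k htk (yseq n) b) (actX S hS t k htk y b)
        ≤ dist (yseq n) y * ‖b‖ := by
      intro n
      rw [dist_eq_norm, ← act_sub_left, dist_eq_norm]
      exact norm_act_le S hS t k htk _ _
    have h0 : Tendsto (fun n => dist (yseq n) y * ‖b‖) atTop (𝓝 0) := by
      have := (tendsto_iff_dist_tendsto_zero.mp hy).mul_const ‖b‖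
      simpa using this
    exact squeeze_zero (fun n => dist_nonneg) hbnd h0
  have claim3 : Tendsto (fun n => actX S hS t k htk z (cfcₙ (capG (dd n)) a)) atTop
      (𝓝 z) := by
    rw [tendsto_iff_dist_tendsto_zero]
    have hbnd : ∀ n, dist z (actX S hS t k htk z (cfcₙ (capG (dd n)) a))
        ≤ Real.sqrt (dd n) := by
      intro n
      rw [dist_eq_norm]
      refine norm_le_of_sq_le (Real.sqrt_nonneg _) ?_
      rw [Real.sq_sqrt (hddpos n).le]
      have := approx_self S hS t k htk z (dd n) (hddpos n)
      rw [← ha_def] at this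
      exact this
    have h0 : Tendsto (fun n => Real.sqrt (dd n)) atTop (𝓝 0) := by
      have h00 := (Real.continuous_sqrt.tendsto 0).comp
        (tendsto_one_div_add_atTop_nhds_zero_nat)
      rw [Real.sqrt_zero] at h00
      exact h00
    refine squeeze_zero (fun n => dist_nonneg) ?_ h0
    intro n
    rw [dist_comm]
    exact hbnd n
  have claim1' : Tendsto (fun n => actX S hS t k htk z (cfcₙ (capG (dd n)) a)) atTop
      (𝓝 (actX S hS t k htk y b)) := by
    have := claim1
    simp only [claim2] at this
    exact this
  exact (tendsto_nhds_unique claim3 claim1')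

end MainSetup5

section MainSetup6

variable {H K T BB CC EE : Type*}
  [TopologicalSpace H] [TopologicalSpace K] [TopologicalSpace T]
  [TopologicalSpace BB] [TopologicalSpace CC] [TopologicalSpace EE]
  (S : EquivSetup H K T BB CC EE) (hS : S.IsFellEquiv)
  (J : Set CC) (hJ : IsFellIdeal S.𝒢K S.DC J)
  (t : T) (k : K) (htk : S.Teq.σ t = S.𝒢K.rng k)

/-- Constructor for elements of the fibre `XE`. -/
def mkXE (b : EE) (hb : S.FE.bund.proj b = S.Teq.ract t k) : XE S hS t k := ⟨b, hb⟩

include hS htk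

lemma fibSum_proj_CC (l : List CC) (hl : ∀ c ∈ l, S.DC.proj c = uu S k) :
    S.DC.proj (S.DC.toBanachBundleData.fibSum (uu S k) l) = uu S k := by
  induction l with
  | nil => exact hS.fellC.proj_zero _
  | cons c l ih =>
    have hc := hl c List.mem_cons_self
    have hrest := ih (fun c hc' => hl c (List.mem_cons_of_mem _ hc'))
    show S.DC.proj (S.DC.toBanachBundleData.add c
      (S.DC.toBanachBundleData.fibSum (uu S k) l)) = uu S k
    rw [hS.fellC.proj_add c _ (hc.trans hrest.symm)]
    exact hc

lemma ract_zero_u (e : EE) (hqe : S.q e = S.Teq.ract t k) :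
    S.FE.ract e (S.DC.zero (uu S k)) = S.FE.bund.zero (S.Teq.ract t k) := by
  have hcomp : S.Teq.σ (S.q e) = S.𝒢K.rng (S.DC.proj (S.DC.zero (uu S k))) := by
    rw [hqe, hS.fellC.proj_zero, sigma_tk S hS t k htk, (uu_unit S k).rng_eq]
  have h2 : S.FE.bund.proj (S.FE.ract e (S.DC.zero (uu S k))) = S.Teq.ract t k := by
    have h3 := hS.proj_ract e (S.DC.zero (uu S k)) hcomp
    show S.q _ = _
    rw [h3, hqe, hS.fellC.proj_zero, ract_tk_u S hS t k htk]
  have h0 : S.DC.zero (uu S k) = S.DC.smul 0 (S.DC.zero (uu S k)) :=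
    (hS.fellC.toIsBanachBundle.smul_zero' 0 (uu S k)).symm
  calc S.FE.ract e (S.DC.zero (uu S k))
      = S.FE.ract e (S.DC.smul 0 (S.DC.zero (uu S k))) := by rw [← h0]
    _ = S.FE.bund.smul 0 (S.FE.ract e (S.DC.zero (uu S k))) :=
        hS.ract_smul 0 e _ hcomp
    _ = S.FE.bund.zero (S.Teq.ract t k) := by
        rw [hS.bund.zero_smul', h2]

lemma ract_add_raw (e : EE) (hqe : S.q e = S.Teq.ract t k) (c c' : CC)
    (hc : S.DC.proj c = uu S k) (hc' : S.DC.proj c' = uu S k) :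
    S.FE.ract e (S.DC.add c c')
      = S.FE.bund.add (S.FE.ract e c) (S.FE.ract e c') :=
  hS.add_ract e c c' (hc.trans hc'.symm)
    (by rw [hqe, hc, sigma_tk S hS t k htk, (uu_unit S k).rng_eq])

lemma ract_fibSum (e : EE) (hqe : S.q e = S.Teq.ract t k) (l : List CC)
    (hl : ∀ c ∈ l, S.DC.proj c = uu S k) :
    S.FE.ract e (S.DC.toBanachBundleData.fibSum (uu S k) l)
      = S.FE.bund.fibSum (S.Teq.ract t k) (l.map (fun c => S.FE.ract e c)) := by
  induction l with
  | nil => exact ract_zero_u S hS t k htk e hqe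
  | cons c l ih =>
    have hc := hl c List.mem_cons_self
    have hlrest : ∀ c' ∈ l, S.DC.proj c' = uu S k :=
      fun c' hc' => hl c' (List.mem_cons_of_mem _ hc')
    have hrest := ih hlrest
    show S.FE.ract e (S.DC.toBanachBundleData.add c _) = _
    rw [ract_add_raw S hS t k htk e hqe c _ hc
      (fibSum_proj_CC S hS t k htk l hlrest), hrest]
    rfl

lemma ract_sub_raw (e : EE) (hqe : S.q e = S.Teq.ract t k) (c w : CC)
    (hc : S.DC.proj c = uu S k) (hw : S.DC.proj w = uu S k) :
    S.FE.ract e (S.DC.toBanachBundleData.sub c w)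
      = S.FE.bund.sub (S.FE.ract e c) (S.FE.ract e w) := by
  show S.FE.ract e (S.DC.add c (S.DC.smul (-1) w)) = _
  rw [ract_add_raw S hS t k htk e hqe c _ hc
    (by rw [hS.fellC.proj_smul]; exact hw)]
  rw [hS.ract_smul (-1) e w (by rw [hqe, hw, sigma_tk S hS t k htk,
    (uu_unit S k).rng_eq])]
  rfl

/-- Fibre sums lift to sums in the Banach space `XE`. -/
lemma fibSum_lift (l : List EE) (hl : ∀ b ∈ l, S.FE.bund.proj b = S.Teq.ract t k) :
    S.FE.bund.fibSum (S.Teq.ract t k) l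
      = ((l.pmap (mkXE S hS t k) hl).sum).1 := by
  induction l with
  | nil => rfl
  | cons b l ih =>
    show S.FE.bund.add b _ = _
    rw [ih (fun b hb => hl b (List.mem_cons_of_mem _ hb))]
    rfl

include hJ in
/-- Generators `E_t · J_k` lie in the closed span of `E_{t·k} · J_{s(k)}`. -/
lemma gen_mem (e : EE) (c : CC) (hqe : S.q e = t) (hcJ : c ∈ J)
    (hck : S.DC.proj c = k) (hw : S.FE.bund.proj (S.FE.ract e c) = S.Teq.ract t k) :
    mkXE S hS t k (S.FE.ract e c) hw
      ∈ closure ((Submodule.span ℂ (Pset S hS J t k htk)) : Set (XE S hS t k)) := by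
  set g : XE S hS t k := mkXE S hS t k (S.FE.ract e c) hw with hg_def
  have hcomp1 : S.Teq.σ (S.q e) = S.𝒢K.rng (S.DC.proj c) := by
    rw [hqe, hck]; exact htk
  have haJ : innerX S hS t k htk g g ∈ J0 S hS J k := by
    have hrho : S.Teq.ρ (S.q g.1) = S.Teq.ρ (S.q e) := by
      have h1 : S.q g.1 = S.Teq.ract t k := g.2
      rw [h1, hqe, rho_tk S hS t k htk]
    have h2 : S.FE.rinner g.1 (S.FE.ract e c) = S.DC.mul (S.FE.rinner g.1 e) c :=
      hS.rinner_ract g.1 e c hrho hcomp1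
    have h3 : (innerX S hS t k htk g g).1 = S.DC.mul (S.FE.rinner g.1 e) c := h2
    show (innerX S hS t k htk g g).1 ∈ J
    rw [h3]
    refine hJ.mul_mem_right _ _ ?_ hcJ
    rw [hS.proj_rinner g.1 e hrho, hck]
    have h4 : S.q g.1 = S.Teq.ract t k := g.2
    rw [h4, hqe]
    rw [src_tauK S hS t k htk (S.Teq.ract t k) t (rho_tk S hS t k htk)]
    exact htk
  have ha : IsSelfAdjoint (innerX S hS t k htk g g) := inner_self_sa S hS t k htk g
  rw [Metric.mem_closure_iff]
  intro ε hε
  have hδ : (0:ℝ) < (ε / 2) ^ 2 := by positivity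
  have hdJ : cfcₙ (capG ((ε / 2) ^ 2)) (innerX S hS t k htk g g) ∈ J0 S hS J k :=
    cfcn_mem_of_closed _ (J0_closed S hS J hJ k) (J0_zero S hS J hJ k)
      (fun x hx y hy => J0_add S hS J hJ k hx hy)
      (fun r x hx => J0_smulR S hS J hJ k r hx)
      (fun x hx y => J0_mulL S hS J hJ k hx y)
      _ ha haJ (capG ((ε / 2) ^ 2)) (capG_continuous hδ) (capG_zero hδ)
  refine ⟨actX S hS t k htk g (cfcₙ (capG ((ε / 2) ^ 2)) (innerX S hS t k htk g g)),
    Submodule.subset_span ⟨g, _, hdJ, rfl⟩, ?_⟩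
  rw [dist_eq_norm]
  have h5 := approx_self S hS t k htk g ((ε / 2) ^ 2) hδ
  have h6 : ‖g - actX S hS t k htk g
      (cfcₙ (capG ((ε / 2) ^ 2)) (innerX S hS t k htk g g))‖ ≤ ε / 2 :=
    norm_le_of_sq_le (by positivity) h5
  linarith

end MainSetup6

/-- **Corollary 3.2**: if `𝒥` is an ideal of `𝒞` and `σ(t) = r(k)`, then the closed
span of `E_t · J_k` in `E_{t·k}` equals the set `E_{t·k} · J_{s(k)}` of actual products
`e·c` with `e ∈ E_{t·k}` and `c ∈ J_{s(k)}`, and the latter set is already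
norm-closed. -/
theorem closed_span_eDotJ
    (H K T BB CC EE : Type*) [TopologicalSpace H] [T2Space H] [LocallyCompactSpace H]
    [SecondCountableTopology H] [TopologicalSpace K] [T2Space K] [LocallyCompactSpace K]
    [SecondCountableTopology K] [TopologicalSpace T] [T2Space T] [LocallyCompactSpace T]
    [SecondCountableTopology T] [TopologicalSpace BB] [TopologicalSpace CC]
    [TopologicalSpace EE]
    (S : EquivSetup H K T BB CC EE) (hS : S.IsFellEquiv)
    (J : Set CC) (hJ : IsFellIdeal S.𝒢K S.DC J)
    (t : T) (k : K) (htk : S.Teq.σ t = S.𝒢K.rng k) :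
    fibSpanApprox S.FE.bund (S.Teq.ract t k)
      (fun w => ∃ e c, S.q e = t ∧ c ∈ J ∧ S.DC.proj c = k ∧ w = S.FE.ract e c)
    = {z : EE | ∃ e c, S.q e = S.Teq.ract t k ∧ c ∈ J ∧ S.DC.proj c = S.𝒢K.src k ∧
        z = S.FE.ract e c} ∧
    S.FE.bund.FibClosed (S.Teq.ract t k)
      {z : EE | ∃ e c, S.q e = S.Teq.ract t k ∧ c ∈ J ∧ S.DC.proj c = S.𝒢K.src k ∧
        z = S.FE.ract e c} := by
  classical
  have huu : uu S k = S.𝒢K.src k := rfl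
  -- fibre computation for elements of the product set (`c` over the unit)
  have fact1 : ∀ (e : EE) (c : CC), S.q e = S.Teq.ract t k → S.DC.proj c = S.𝒢K.src k →
      S.FE.bund.proj (S.FE.ract e c) = S.Teq.ract t k := by
    intro e c hqe hc
    have hcomp : S.Teq.σ (S.q e) = S.𝒢K.rng (S.DC.proj c) := by
      rw [hqe, hc, ← huu, sigma_tk S hS t k htk, (uu_unit S k).rng_eq]
    have h := hS.proj_ract e c hcomp
    show S.q _ = _
    rw [h, hqe, hc, ← huu, ract_tk_u S hS t k htk]
  -- fibre computation for the generators (`c` over `k`)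
  have fact1b : ∀ (e : EE) (c : CC), S.q e = t → S.DC.proj c = k →
      S.FE.bund.proj (S.FE.ract e c) = S.Teq.ract t k := by
    intro e c hqe hc
    have hcomp : S.Teq.σ (S.q e) = S.𝒢K.rng (S.DC.proj c) := by
      rw [hqe, hc]; exact htk
    have h := hS.proj_ract e c hcomp
    show S.q _ = _
    rw [h, hqe, hc]
  -- the factorization wrapper
  have key2 : ∀ (z : EE) (hz : S.FE.bund.proj z = S.Teq.ract t k),
      (mkXE S hS t k z hz ∈
        closure ((Submodule.span ℂ (Pset S hS J t k htk)) : Set (XE S hS t k))) →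
      z ∈ {z : EE | ∃ e c, S.q e = S.Teq.ract t k ∧ c ∈ J ∧
        S.DC.proj c = S.𝒢K.src k ∧ z = S.FE.ract e c} := by
    intro z hz hmem
    obtain ⟨y, b, hbJ, heq⟩ := factor_mem S hS J hJ t k htk (mkXE S hS t k z hz) hmem
    refine ⟨y.1, b.1, y.2, hbJ, by rw [← huu]; exact b.2, ?_⟩
    exact congrArg Subtype.val heq
  -- the closed submodule
  set Mc := (Submodule.span ℂ (Pset S hS J t k htk)).topologicalClosure with hMc_def
  have hMc_closed : IsClosed (Mc : Set (XE S hS t k)) :=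
    Submodule.isClosed_topologicalClosure _
  have hcoe : (Mc : Set (XE S hS t k))
      = closure ((Submodule.span ℂ (Pset S hS J t k htk)) : Set (XE S hS t k)) :=
    Submodule.topologicalClosure_coe _
  -- LHS ⊆ RHS
  have main2 : ∀ z ∈ fibSpanApprox S.FE.bund (S.Teq.ract t k)
      (fun w => ∃ e c, S.q e = t ∧ c ∈ J ∧ S.DC.proj c = k ∧ w = S.FE.ract e c),
      z ∈ {z : EE | ∃ e c, S.q e = S.Teq.ract t k ∧ c ∈ J ∧
        S.DC.proj c = S.𝒢K.src k ∧ z = S.FE.ract e c} := by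
    intro z hz
    obtain ⟨hz1, hz2⟩ := hz
    refine key2 z hz1 ?_
    rw [← hcoe]
    have hsub : mkXE S hS t k z hz1 ∈ closure (Mc : Set (XE S hS t k)) := by
      rw [Metric.mem_closure_iff]
      intro ε hε
      obtain ⟨l, hlP, hldist⟩ := hz2 ε hε
      have hl_fib : ∀ b ∈ l, S.FE.bund.proj b = S.Teq.ract t k := by
        intro b hb
        obtain ⟨e, c, hqe, hcJ, hck, rfl⟩ := hlP b hb
        exact fact1b e c hqe hck
      refine ⟨(l.pmap (mkXE S hS t k) hl_fib).sum, ?_, ?_⟩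
      · refine list_sum_mem ?_
        intro w hwmem
        rw [List.mem_pmap] at hwmem
        obtain ⟨b, hb, rfl⟩ := hwmem
        obtain ⟨e, c, hqe, hcJ, hck, hbe⟩ := hlP b hb
        subst hbe
        have hg := gen_mem S hS J hJ t k htk e c hqe hcJ hck (hl_fib _ hb)
        rw [← hcoe] at hg
        exact hg
      · rw [Fibre.dist_def]
        have hfs := fibSum_lift S hS t k htk l hl_fib
        rw [← hfs]
        exact hldist
    rwa [hMc_closed.closure_eq] at hsub
  -- RHS ⊆ LHS
  have main1 : ∀ z ∈ {z : EE | ∃ e c, S.q e = S.Teq.ract t k ∧ c ∈ J ∧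
      S.DC.proj c = S.𝒢K.src k ∧ z = S.FE.ract e c},
      z ∈ fibSpanApprox S.FE.bund (S.Teq.ract t k)
        (fun w => ∃ e c, S.q e = t ∧ c ∈ J ∧ S.DC.proj c = k ∧ w = S.FE.ract e c) := by
    rintro z ⟨e, c, hqe, hcJ, hcu, rfl⟩
    have hcu' : S.DC.proj c = uu S k := hcu
    refine ⟨fact1 e c hqe hcu, ?_⟩
    intro ε hε
    have hnne : (0:ℝ) ≤ S.FE.bund.norm e := hS.bund.norm_nonneg e
    have hfull := hJ.fellSubbundle.full_src k c hcJ hcu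
    obtain ⟨hprojc, happ⟩ := hfull
    obtain ⟨l, hlP2, hldist⟩ := happ (ε / (S.FE.bund.norm e + 1)) (by positivity)
    -- each element of `l` lies in the fibre over the unit
    have hl_fib : ∀ w ∈ l, S.DC.proj w = uu S k := by
      intro w hw
      obtain ⟨α, hαJ, β, hβJ, hαk, hβk, rfl⟩ := hlP2 w hw
      have hsrk : S.𝒢K.src (S.DC.proj (S.DC.star α)) = S.𝒢K.rng (S.DC.proj β) := by
        rw [hS.fellC.proj_star, hαk, hβk, S.𝒢K.src_inv]
      rw [hS.fellC.proj_mul _ _ hsrk, hS.fellC.proj_star, hαk, hβk, S.𝒢K.inv_mul]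
      rfl
    refine ⟨l.map (fun w => S.FE.ract e w), ?_, ?_⟩
    · intro w' hw'
      rw [List.mem_map] at hw'
      obtain ⟨w, hw, rfl⟩ := hw'
      obtain ⟨α, hαJ, β, hβJ, hαk, hβk, rfl⟩ := hlP2 w hw
      have hcomp_estar : S.Teq.σ (S.q e) = S.𝒢K.rng (S.DC.proj (S.DC.star α)) := by
        rw [hqe, hS.fellC.proj_star, hαk, S.𝒢K.rng_inv, ← huu,
          sigma_tk S hS t k htk]
      have hsrc : S.𝒢K.src (S.DC.proj (S.DC.star α)) = S.𝒢K.rng (S.DC.proj β) := by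
        rw [hS.fellC.proj_star, hαk, hβk, S.𝒢K.src_inv]
      have hsplit : S.FE.ract e (S.DC.mul (S.DC.star α) β)
          = S.FE.ract (S.FE.ract e (S.DC.star α)) β :=
        hS.ract_ract e (S.DC.star α) β hcomp_estar hsrc
      have hq' : S.q (S.FE.ract e (S.DC.star α)) = t := by
        have h := hS.proj_ract e (S.DC.star α) hcomp_estar
        rw [h, hqe, hS.fellC.proj_star, hαk]
        exact ract_tk_invk S hS t k htk
      exact ⟨S.FE.ract e (S.DC.star α), β, hq', hβJ, hβk, hsplit⟩
    · -- the norm estimate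
      have hprojsum := fibSum_proj_CC S hS t k htk l hl_fib
      have hsubproj : S.DC.proj (S.DC.toBanachBundleData.sub c
          (S.DC.toBanachBundleData.fibSum (uu S k) l)) = uu S k := by
        show S.DC.proj (S.DC.add c _) = uu S k
        rw [hS.fellC.proj_add c _ (by
          rw [hS.fellC.proj_smul]
          exact hcu'.trans hprojsum.symm)]
        exact hcu'
      have hkey : S.FE.bund.sub (S.FE.ract e c)
          (S.FE.bund.fibSum (S.Teq.ract t k) (l.map (fun w => S.FE.ract e w)))
          = S.FE.ract e (S.DC.toBanachBundleData.sub c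
              (S.DC.toBanachBundleData.fibSum (uu S k) l)) := by
        rw [ract_sub_raw S hS t k htk e hqe c _ hcu' hprojsum,
          ract_fibSum S hS t k htk e hqe l hl_fib]
      rw [hkey]
      have hbound := hS.norm_ract_le e _ (by
        rw [hqe, hsubproj, sigma_tk S hS t k htk, (uu_unit S k).rng_eq] :
        S.Teq.σ (S.q e) = S.𝒢K.rng (S.DC.proj (S.DC.toBanachBundleData.sub c
          (S.DC.toBanachBundleData.fibSum (uu S k) l))))
      have hx_nonneg : (0:ℝ) ≤ S.DC.norm (S.DC.toBanachBundleData.sub c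
          (S.DC.toBanachBundleData.fibSum (uu S k) l)) :=
        hS.fellC.norm_nonneg _
      have h1 : S.FE.bund.norm e * S.DC.norm (S.DC.toBanachBundleData.sub c
            (S.DC.toBanachBundleData.fibSum (uu S k) l))
          ≤ S.FE.bund.norm e * (ε / (S.FE.bund.norm e + 1)) :=
        mul_le_mul_of_nonneg_left (le_of_lt hldist) hnne
      have h2 : S.FE.bund.norm e * (ε / (S.FE.bund.norm e + 1)) < ε := by
        rw [mul_div_assoc']
        rw [div_lt_iff₀ (by positivity)]
        nlinarith
      calc S.FE.bund.norm (S.FE.ract e _) ≤ _ := hbound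
        _ < ε := lt_of_le_of_lt h1 h2
  constructor
  · apply Set.eq_of_subset_of_subset
    · intro z hz; exact main2 z hz
    · intro z hz
      exact main1 z hz
  · -- closedness of the product set
    intro useq b hmem hbproj htends
    have hfib : ∀ n, S.FE.bund.proj (useq n) = S.Teq.ract t k := by
      intro n
      obtain ⟨e, c, hqe, hcJ, hcu, hueq⟩ := hmem n
      rw [hueq]
      exact fact1 e c hqe hcu
    have htendX : Tendsto (fun n => mkXE S hS t k (useq n) (hfib n)) atTop
        (𝓝 (mkXE S hS t k b hbproj)) := by
      rw [tendsto_iff_dist_tendsto_zero]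
      exact htends.congr fun n => (Fibre.dist_def _ _).symm
    have hmemXn : ∀ n, mkXE S hS t k (useq n) (hfib n)
        ∈ ((Submodule.span ℂ (Pset S hS J t k htk)) : Set (XE S hS t k)) := by
      intro n
      obtain ⟨e, c, hqe, hcJ, hcu, hueq⟩ := hmem n
      refine Submodule.subset_span ?_
      refine ⟨⟨e, hqe⟩, ⟨c, hcu⟩, hcJ, ?_⟩
      exact Subtype.ext hueq
    have hbX : mkXE S hS t k b hbproj
        ∈ closure ((Submodule.span ℂ (Pset S hS J t k htk)) : Set (XE S hS t k)) :=
      mem_closure_of_tendsto htendX (Filter.Eventually.of_forall hmemXn)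
    exact key2 b hbproj hbX

end FellRieffel
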